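/- arXiv:2309.09221 — 8 statements merged into one kernel-verified Lean document; each statement's English description precedes it below -/
import Mathlib

section
/- Let S ⊆ ℕ^d be an affine semigroup equipped with a grading deg : S → ℕ that is additive (deg(a+b) = deg a + deg b) with deg a ≥ 1 for all nonzero a ∈ S, and suppose S is semi-standard graded in the sense that there is N such that every element of S of degree ≥ N can be written as a sum of an element of degree 1 and another element of S. If e ∈ S generates a one-dimensional face ℕ·e of S (that is, for all a, b ∈ S, a + b ∈ ℕ·e iff a ∈ ℕ·e and b ∈ ℕ·e) and e is a minimal generator of S, then deg e = 1. -/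
theorem D_smul {d : ℕ} (D : (Fin d → ℕ) → ℕ)
    (hadd : ∀ a b : Fin d → ℕ, D (a + b) = D a + D b)
    (e : Fin d → ℕ) : ∀ n : ℕ, D (n • e) = n * D e := by
  have h0 : D 0 = 0 := by have := hadd 0 0; simpa using this
  intro n
  induction n with
  | zero => simpa using h0
  | succ n ih => rw [succ_nsmul, hadd, ih]; ring

/-- In a semi-standard graded affine semigroup `S ⊆ ℕ^d`, every minimal generator `e`
spanning a one-dimensional face `ℕ·e` of `S` has degree 1. -/
theorem extremal_generator_deg_one {d : ℕ} (S : AddSubmonoid (Fin d → ℕ))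
    (hfg : ∃ G : Finset (Fin d → ℕ), AddSubmonoid.closure (G : Set (Fin d → ℕ)) = S)
    (D : (Fin d → ℕ) → ℕ)
    (hadd : ∀ a b : Fin d → ℕ, D (a + b) = D a + D b)
    (hpos : ∀ a ∈ S, a ≠ 0 → 1 ≤ D a)
    -- semi-standard gradedness: every element of `S` of large degree splits off a
    -- degree-one element of `S`
    (hss : ∃ N : ℕ, ∀ s ∈ S, N ≤ D s → ∃ a ∈ S, ∃ b ∈ S, D a = 1 ∧ s = a + b)
    (e : Fin d → ℕ) (he : e ∈ S)
    -- `ℕ·e` is a (one-dimensional) face of `S`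
    (hface : ∀ a ∈ S, ∀ b ∈ S,
      (a + b ∈ AddSubmonoid.closure ({e} : Set (Fin d → ℕ)) ↔
        a ∈ AddSubmonoid.closure ({e} : Set (Fin d → ℕ)) ∧
        b ∈ AddSubmonoid.closure ({e} : Set (Fin d → ℕ))))
    -- `e` is a minimal generator of `S`
    (hmin : ∀ X : Set (Fin d → ℕ), AddSubmonoid.closure X = S → e ∈ X) :
    D e = 1 := by
  -- e ≠ 0
  have hne : e ≠ 0 := by
    have : e ∈ ((S : Set (Fin d → ℕ)) \ {0}) := by
      apply hmin
      apply le_antisymm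
      · rw [AddSubmonoid.closure_le]
        intro x hx; exact hx.1
      · intro s hs
        by_cases h : s = 0
        · rw [h]; exact (AddSubmonoid.closure _).zero_mem
        · exact AddSubmonoid.subset_closure ⟨hs, h⟩
    simpa using this.2
  have hDe : 1 ≤ D e := hpos e he hne
  obtain ⟨N, hN⟩ := hss
  have hmem : (N • e : Fin d → ℕ) ∈ S := S.nsmul_mem he N
  have hdeg : N ≤ D (N • e) := by
    rw [D_smul D hadd]
    calc N = N * 1 := (mul_one N).symm
    _ ≤ N * D e := Nat.mul_le_mul_left N hDe
  obtain ⟨a, ha, b, hb, hDa, heq⟩ := hN _ hmem hdeg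
  have hcl : a + b ∈ AddSubmonoid.closure ({e} : Set (Fin d → ℕ)) := by
    rw [← heq, AddSubmonoid.mem_closure_singleton]
    exact ⟨N, rfl⟩
  have ha' := ((hface a ha b hb).mp hcl).1
  rw [AddSubmonoid.mem_closure_singleton] at ha'
  obtain ⟨k, hk⟩ := ha'
  have : k * D e = 1 := by rw [← D_smul D hadd, hk, hDa]
  exact (Nat.eq_one_of_mul_eq_one_left this)
end

section
/- Let d ≥ 2 and let C ⊆ ℝ^d be a pointed, finitely generated convex cone of dimension d, with E its set of extremal rays. If x ∈ ℝ^d and x ∉ C, then there exists an extremal ray l ∈ E of C such that the translate (x + l) ∩ C is empty, i.e., x + t·v ∉ C for all t ≥ 0, where v is a generator of l. -/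
open Finset

/-- `F` is a face of the cone `C`: `F ⊆ C` and for all `a, b ∈ C`,
`a + b ∈ F` iff `a ∈ F` and `b ∈ F`. -/
def IsFaceOfCone {d : ℕ} (C F : Set (Fin d → ℝ)) : Prop :=
  F ⊆ C ∧ ∀ a ∈ C, ∀ b ∈ C, (a + b ∈ F ↔ a ∈ F ∧ b ∈ F)

/-!
By Farkas' lemma some functional `φ₀` is nonnegative on `C` and negative at `x`. As `dim C ≥ 2`,
some generator `g` is off the line `ℝ x`, so some `ψ` vanishes at `x` and is negative at `g`.
Tilting `φ₀` towards `ψ` as far as nonnegativity on the generators allows gives a functional `φ`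
that is still nonnegative on `C` and negative at `x`, and vanishes at a nonzero generator. The
exposed face `C ∩ ker φ` is then a nonzero pointed cone spanned by the generators in `ker φ`; an
extremal ray `ℝ≥0 v` of it is one of `C`, and `φ (x + t v) = φ x < 0` keeps `x + t v` out of `C`.

The same tilting, applied to `x = -g` for a nonzero generator `g` of a pointed cone, produces a
proper exposed face containing a nonzero generator; iterating ends at a cone which is a ray.
-/

open Module Submodule

namespace Module.Dual

variable {𝕜 E : Type*} [Field 𝕜] [AddCommGroup E] [Module 𝕜 E]

/-- The projection onto `ker φ` along `g₀` (a junk map when `φ g₀ = 0`). -/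
def projKerAlong (φ : Dual 𝕜 E) (g₀ : E) : E →ₗ[𝕜] E :=
  LinearMap.id - (φ g₀)⁻¹ • φ.smulRight g₀

lemma projKerAlong_apply (φ : Dual 𝕜 E) (g₀ y : E) :
    φ.projKerAlong g₀ y = y - (φ y / φ g₀) • g₀ := by
  simp [projKerAlong, div_eq_inv_mul, mul_smul]

lemma projKerAlong_self {φ : Dual 𝕜 E} {g₀ : E} (h : φ g₀ ≠ 0) : φ.projKerAlong g₀ g₀ = 0 := by
  simp [projKerAlong_apply, h]

end Module.Dual

namespace Submodule

variable {𝕜 E : Type*} [Field 𝕜] [AddCommGroup E] [Module 𝕜 E]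

variable (𝕜) in
lemma exists_mem_notMem_span_singleton [FiniteDimensional 𝕜 E] {s : Set E}
    (hs : span 𝕜 s = ⊤) (hE : 2 ≤ finrank 𝕜 E) (x : E) : ∃ g ∈ s, g ∉ 𝕜 ∙ x := by
  by_contra! h
  have : finrank 𝕜 (⊤ : Submodule 𝕜 E) ≤ 1 := by
    rw [← hs]
    exact (finrank_mono (span_le.2 h)).trans
      ((finrank_span_le_card ({x} : Set E)).trans (by simp))
  rw [finrank_top] at this
  omega

lemma exists_dual_neg_of_notMem [LinearOrder 𝕜] [IsStrictOrderedRing 𝕜] {p : Submodule 𝕜 E}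
    {y : E} (hy : y ∉ p) : ∃ φ : Dual 𝕜 E, φ y < 0 ∧ ∀ z ∈ p, φ z = 0 := by
  obtain ⟨φ, hφy, hφp⟩ := exists_dual_map_eq_bot_of_notMem hy inferInstance
  have hφp : ∀ z ∈ p, φ z = 0 := fun z hz => (mem_bot 𝕜).1 (hφp ▸ mem_map_of_mem hz)
  rcases hφy.lt_or_gt with h | h
  · exact ⟨φ, h, hφp⟩
  · exact ⟨-φ, by simpa using h, fun z hz => by simp [hφp z hz]⟩

end Submodule

namespace PointedCone

variable {𝕜 E : Type*} [Field 𝕜] [LinearOrder 𝕜] [IsStrictOrderedRing 𝕜]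
  [AddCommGroup E] [Module 𝕜 E]

lemma mem_hull_finset_iff {G : Finset E} {x : E} :
    x ∈ hull 𝕜 (G : Set E) ↔ ∃ c : E → 𝕜, (∀ g, 0 ≤ c g) ∧ x = ∑ g ∈ G, c g • g := by
  constructor
  · rw [mem_span_finset]
    rintro ⟨f, -, rfl⟩
    exact ⟨fun g => f g, fun g => (f g).2, rfl⟩
  · rintro ⟨c, hc, rfl⟩
    exact sum_mem fun g hg => smul_mem _ (hc g) (subset_hull hg)

lemma coe_hull_singleton (v : E) :
    (hull 𝕜 {v} : Set E) = {y | ∃ t : 𝕜, 0 ≤ t ∧ y = t • v} := by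
  ext y
  simp only [SetLike.mem_coe, mem_span_singleton, Set.mem_ofPred_eq]
  constructor
  · rintro ⟨t, rfl⟩
    exact ⟨t, t.2, rfl⟩
  · rintro ⟨t, ht, rfl⟩
    exact ⟨⟨t, ht⟩, rfl⟩

lemma map_nonneg_of_mem_hull {s : Set E} {φ : Dual 𝕜 E} (hφ : ∀ g ∈ s, 0 ≤ φ g) {y : E}
    (hy : y ∈ hull 𝕜 s) : 0 ≤ φ y :=
  (span_le (p := (positive 𝕜 𝕜).comap φ)).2 hφ hy

lemma map_eq_zero_of_mem_hull {s : Set E} {φ : Dual 𝕜 E} (hφ : ∀ g ∈ s, φ g = 0) {y : E}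
    (hy : y ∈ hull 𝕜 s) : φ y = 0 :=
  (span_le (p := ((LinearMap.ker φ : Submodule 𝕜 E) : PointedCone 𝕜 E))).2 hφ hy

lemma hull_image_projKerAlong_le {G : Finset E} {φ : Dual 𝕜 E} {g₀ : E} (hg₀ : φ g₀ < 0)
    (hG : ∀ g ∈ G, 0 ≤ φ g) :
    hull 𝕜 (φ.projKerAlong g₀ '' G) ≤ hull 𝕜 (insert g₀ G : Set E) := by
  rw [span_le]
  rintro _ ⟨g, hg, rfl⟩
  rw [Dual.projKerAlong_apply, sub_eq_add_neg, ← neg_smul, ← neg_div]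
  exact add_mem (subset_hull (Set.mem_insert_of_mem _ hg))
    (smul_mem _ (div_nonneg_of_nonpos (neg_nonpos.2 (hG g hg)) hg₀.le)
      (subset_hull (Set.mem_insert _ _)))

/-- Farkas' lemma for finitely generated cones. -/
theorem exists_dual_nonneg_neg_of_notMem_hull (G : Finset E) {x : E}
    (hx : x ∉ hull 𝕜 (G : Set E)) : ∃ φ : Dual 𝕜 E, (∀ g ∈ G, 0 ≤ φ g) ∧ φ x < 0 := by
  classical
  rcases G.eq_empty_or_nonempty with rfl | ⟨g₀, hg₀⟩
  · obtain ⟨φ, hφ, -⟩ := exists_dual_neg_of_notMem (p := ⊥) (y := x)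
      (fun h => hx ((mem_bot 𝕜).1 h ▸ zero_mem _))
    exact ⟨φ, by simp, hφ⟩
  set G' := G.erase g₀
  have hG : (G : Set E) = insert g₀ (G' : Set E) := by
    rw [← Finset.coe_insert, Finset.insert_erase hg₀]
  have hcard : G'.card < G.card := Finset.card_erase_lt_of_mem hg₀
  obtain ⟨φ, hφ, hφx⟩ := exists_dual_nonneg_neg_of_notMem_hull G'
    (fun h => hx (span_mono (by simp [G']) h))
  rcases le_or_gt 0 (φ g₀) with hφg₀ | hφg₀
  · refine ⟨φ, fun g hg => ?_, hφx⟩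
    obtain rfl | hne := eq_or_ne g g₀
    · exact hφg₀
    · exact hφ g (Finset.mem_erase.2 ⟨hne, hg⟩)
  -- Otherwise recurse on the projection of the problem onto `ker φ` along `g₀`,
  -- and pull the resulting functional back.
  set p := φ.projKerAlong g₀
  have hcard' : (G'.image p).card < G.card := Finset.card_image_le.trans_lt hcard
  have hpx : p x ∉ hull 𝕜 ((G'.image p : Finset E) : Set E) := by
    intro h
    apply hx
    have hx_eq : x = p x + (φ x / φ g₀) • g₀ := by simp [p, Dual.projKerAlong_apply]
    rw [hG, hx_eq]
    refine add_mem (hull_image_projKerAlong_le hφg₀ hφ (by simpa using h)) ?_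
    exact smul_mem _ (div_nonneg_of_nonpos hφx.le hφg₀.le) (subset_hull (Set.mem_insert _ _))
  obtain ⟨ψ, hψ, hψx⟩ := exists_dual_nonneg_neg_of_notMem_hull (G'.image p) hpx
  refine ⟨ψ ∘ₗ p, fun g hg => ?_, hψx⟩
  obtain rfl | hne := eq_or_ne g g₀
  · simp [p, Dual.projKerAlong_self hφg₀.ne]
  · exact hψ _ (Finset.mem_image_of_mem p (Finset.mem_erase.2 ⟨hne, hg⟩))
termination_by G.card

/-- The witness is `φ₀ + T • ψ` with `T` the least ratio `φ₀ g / -ψ g` over `ψ g < 0`. -/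
lemma exists_dual_nonneg_neg_vanishing_at_neg {G : Finset E} {x g₁ : E} {φ₀ ψ : Dual 𝕜 E}
    (hφ₀ : ∀ g ∈ G, 0 ≤ φ₀ g) (hφ₀x : φ₀ x < 0) (hψx : ψ x = 0) (hg₁ : g₁ ∈ G)
    (hψg₁ : ψ g₁ < 0) :
    ∃ φ : Dual 𝕜 E, (∀ g ∈ G, 0 ≤ φ g) ∧ φ x < 0 ∧ ∃ g ∈ G, ψ g < 0 ∧ φ g = 0 := by
  classical
  obtain ⟨g₂, hg₂, hmin⟩ := (G.filter (ψ · < 0)).exists_min_image (fun g => φ₀ g / -ψ g)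
    ⟨g₁, Finset.mem_filter.2 ⟨hg₁, hψg₁⟩⟩
  obtain ⟨hg₂G, hψg₂⟩ := Finset.mem_filter.1 hg₂
  set T := φ₀ g₂ / -ψ g₂
  have hT : 0 ≤ T := div_nonneg (hφ₀ _ hg₂G) (neg_nonneg.2 hψg₂.le)
  refine ⟨φ₀ + T • ψ, fun g hg => ?_, by simpa [hψx] using hφ₀x, g₂, hg₂G, hψg₂, ?_⟩
  · simp only [LinearMap.add_apply, LinearMap.smul_apply, smul_eq_mul]
    rcases le_or_gt 0 (ψ g) with h | h
    · exact add_nonneg (hφ₀ g hg) (mul_nonneg hT h)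
    · have hTg := hmin g (Finset.mem_filter.2 ⟨hg, h⟩)
      rw [le_div_iff₀ (neg_pos.2 h)] at hTg
      linarith
  · simp only [LinearMap.add_apply, LinearMap.smul_apply, smul_eq_mul, T]
    field_simp [hψg₂.ne]
    ring

theorem exists_dual_nonneg_neg_vanishing_at_ne_zero {G : Finset E} {x g₁ : E}
    (hx : x ∉ hull 𝕜 (G : Set E)) (hg₁ : g₁ ∈ G) (hg₁x : g₁ ∉ 𝕜 ∙ x) :
    ∃ φ : Dual 𝕜 E, (∀ g ∈ G, 0 ≤ φ g) ∧ φ x < 0 ∧ ∃ g ∈ G, g ≠ 0 ∧ φ g = 0 := by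
  obtain ⟨φ₀, hφ₀, hφ₀x⟩ := exists_dual_nonneg_neg_of_notMem_hull G hx
  obtain ⟨ψ, hψg₁, hψx⟩ := exists_dual_neg_of_notMem hg₁x
  obtain ⟨φ, hφ, hφx, g, hg, hψg, hφg⟩ := exists_dual_nonneg_neg_vanishing_at_neg hφ₀ hφ₀x
    (hψx x (mem_span_singleton_self x)) hg₁ hψg₁
  exact ⟨φ, hφ, hφx, g, hg, fun h => by simp [h] at hψg, hφg⟩

lemma mem_hull_filter_of_map_eq_zero {G : Finset E} {φ : Dual 𝕜 E} (hφ : ∀ g ∈ G, 0 ≤ φ g)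
    {y : E} (hy : y ∈ hull 𝕜 (G : Set E)) (hφy : φ y = 0) :
    y ∈ hull 𝕜 (G.filter (φ · = 0) : Set E) := by
  classical
  obtain ⟨c, hc, rfl⟩ := mem_hull_finset_iff.1 hy
  simp only [map_sum, map_smul, smul_eq_mul] at hφy
  have hterm := (Finset.sum_eq_zero_iff_of_nonneg fun g hg => mul_nonneg (hc g) (hφ g hg)).1 hφy
  refine mem_hull_finset_iff.2 ⟨c, hc, (Finset.sum_filter_of_ne fun g hg hne => ?_).symm⟩
  exact (mul_eq_zero.1 (hterm g hg)).resolve_left (left_ne_zero_of_smul hne)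

lemma isFaceOf_hull_filter {G : Finset E} {φ : Dual 𝕜 E} (hφ : ∀ g ∈ G, 0 ≤ φ g) :
    (hull 𝕜 (G.filter (φ · = 0) : Set E)).IsFaceOf (hull 𝕜 (G : Set E)) := by
  refine .of_mem_of_add_mem_left (span_mono (Finset.coe_subset.2 (Finset.filter_subset _ _)))
    fun {x y} hx hy hxy => mem_hull_filter_of_map_eq_zero hφ hx ?_
  have hφxy : φ (x + y) = 0 := map_eq_zero_of_mem_hull (by simp) hxy
  have hφx := map_nonneg_of_mem_hull hφ hx
  have hφy := map_nonneg_of_mem_hull hφ hy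
  rw [map_add] at hφxy
  linarith

lemma hull_eq_hull_singleton {G : Finset E}
    (hG : ∀ y ∈ hull 𝕜 (G : Set E), -y ∈ hull 𝕜 (G : Set E) → y = 0) {g₁ : E} (hg₁ : g₁ ∈ G)
    (hline : ∀ g ∈ G, g ∈ 𝕜 ∙ g₁) :
    hull 𝕜 (G : Set E) = hull 𝕜 {g₁} := by
  refine le_antisymm (span_le.2 fun g hg => ?_) (span_mono (by simpa using hg₁))
  obtain ⟨a, rfl⟩ := mem_span_singleton.1 (hline g hg)
  rcases le_or_gt 0 a with ha | ha
  · exact smul_mem _ ha (subset_hull rfl)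
  · have hneg : -(a • g₁) ∈ hull 𝕜 (G : Set E) := by
      rw [← neg_smul]
      exact smul_mem _ (neg_nonneg.2 ha.le) (subset_hull hg₁)
    rw [SetLike.mem_coe, hG _ (subset_hull hg) hneg]
    exact zero_mem _

theorem exists_ray_isFaceOf_hull {G : Finset E}
    (hG : ∀ y ∈ hull 𝕜 (G : Set E), -y ∈ hull 𝕜 (G : Set E) → y = 0) {g₁ : E} (hg₁ : g₁ ∈ G)
    (hg₁0 : g₁ ≠ 0) :
    ∃ v : E, v ≠ 0 ∧ (hull 𝕜 {v}).IsFaceOf (hull 𝕜 (G : Set E)) := by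
  classical
  by_cases hline : ∀ g ∈ G, g ∈ 𝕜 ∙ g₁
  · exact ⟨g₁, hg₁0, hull_eq_hull_singleton hG hg₁ hline ▸ .rfl⟩
  push Not at hline
  obtain ⟨g, hg, hgg₁⟩ := hline
  have hng₁ : -g₁ ∉ hull 𝕜 (G : Set E) := fun h => hg₁0 (hG _ (subset_hull hg₁) h)
  obtain ⟨φ, hφ, hφg₁, g₂, hg₂, hg₂0, hφg₂⟩ :=
    exists_dual_nonneg_neg_vanishing_at_ne_zero hng₁ hg (by rwa [← Set.neg_singleton, span_neg])
  have hZG := (isFaceOf_hull_filter hφ).le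
  have hcard : (G.filter (φ · = 0)).card < G.card := Finset.card_lt_card
    ⟨Finset.filter_subset _ _, fun h => by simp [(Finset.mem_filter.1 (h hg₁)).2] at hφg₁⟩
  obtain ⟨v, hv0, hv⟩ := exists_ray_isFaceOf_hull (fun y hy hny => hG y (hZG hy) (hZG hny))
    (Finset.mem_filter.2 ⟨hg₂, hφg₂⟩) hg₂0
  exact ⟨v, hv0, hv.trans (isFaceOf_hull_filter hφ)⟩
termination_by G.card

end PointedCone

open PointedCone

lemma isFaceOfCone_of_isFaceOf {d : ℕ} {F C : PointedCone ℝ (Fin d → ℝ)} (h : F.IsFaceOf C) :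
    IsFaceOfCone (C : Set (Fin d → ℝ)) F :=
  ⟨h.le, fun _ ha _ hb => h.add_mem_iff_mem ha hb⟩

/-- Let `d ≥ 2` and let `C ⊆ ℝ^d` be a pointed finitely generated convex cone of full
dimension `d`. If `x ∉ C`, then there is an extremal ray of `C` (a one-dimensional face,
spanned by some `v ≠ 0`) whose translate by `x` misses `C`. -/
theorem exists_extremal_ray_translate_disjoint (d : ℕ) (hd : 2 ≤ d)
    (G : Finset (Fin d → ℝ)) (C : Set (Fin d → ℝ))
    (hC : C = {x | ∃ c : (Fin d → ℝ) → ℝ, (∀ g, 0 ≤ c g) ∧ x = ∑ g ∈ G, c g • g})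
    (hpointed : ∀ x ∈ C, -x ∈ C → x = 0)
    (hfull : Submodule.span ℝ C = ⊤)
    (x : Fin d → ℝ) (hx : x ∉ C) :
    ∃ v : Fin d → ℝ, v ≠ 0 ∧
      IsFaceOfCone C {y | ∃ t : ℝ, 0 ≤ t ∧ y = t • v} ∧
      ∀ t : ℝ, 0 ≤ t → x + t • v ∉ C := by
  obtain rfl : C = hull ℝ (G : Set (Fin d → ℝ)) := by
    ext y
    rw [hC, Set.mem_ofPred_eq, SetLike.mem_coe, mem_hull_finset_iff]
  obtain ⟨g₁, hg₁, hg₁x⟩ := exists_mem_notMem_span_singleton ℝ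
    (by rwa [span_span_of_tower] at hfull) (by simpa using hd) x
  obtain ⟨φ, hφ, hφx, g₂, hg₂, hg₂0, hφg₂⟩ :=
    exists_dual_nonneg_neg_vanishing_at_ne_zero hx hg₁ hg₁x
  have hZG := (isFaceOf_hull_filter hφ).le
  obtain ⟨v, hv0, hv⟩ := exists_ray_isFaceOf_hull (fun y hy hny => hpointed y (hZG hy) (hZG hny))
    (Finset.mem_filter.2 ⟨hg₂, hφg₂⟩) hg₂0
  refine ⟨v, hv0, coe_hull_singleton (𝕜 := ℝ) v ▸
    isFaceOfCone_of_isFaceOf (hv.trans (isFaceOf_hull_filter hφ)), fun t _ hxt => ?_⟩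
  have hφv : φ v = 0 := map_eq_zero_of_mem_hull (by simp) (hv.le (subset_hull rfl))
  have hφxt := map_nonneg_of_mem_hull hφ hxt
  simp only [map_add, map_smul, hφv, smul_zero, add_zero] at hφxt
  linarith
end

section
/- Let s ≥ 2 and let h_0, h_1, …, h_s be integers with h_0 = 1 and h_s ≥ 1. Suppose that for every j with 0 ≤ j ≤ ⌊s/2⌋ the inequality h_s + h_{s−1} + ⋯ + h_{s−j} ≥ h_0 + h_1 + ⋯ + h_j holds, and suppose (s−1)(h_s − 1) = Σ_{j=1}^{⌊s/2⌋} (s − 2j)(h_j − h_{s−j}). Then h_s = 1. -/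
open Finset

private lemma abel_aux (c : ℤ) (d : ℕ → ℤ) :
    ∀ m : ℕ, 1 ≤ m →
      ∑ j ∈ Icc 1 m, (c - 2 * (j : ℤ)) * d j
        = (c - 2 * (m : ℤ)) * ∑ j ∈ Icc 1 m, d j
          + 2 * ∑ k ∈ Icc 1 (m - 1), ∑ j ∈ Icc 1 k, d j := by
  intro m hm
  induction m, hm using Nat.le_induction with
  | base => simp
  | succ m hm ih =>
      have hsplit : ∑ k ∈ Icc 1 m, ∑ j ∈ Icc 1 k, d j
          = (∑ k ∈ Icc 1 (m - 1), ∑ j ∈ Icc 1 k, d j) + ∑ j ∈ Icc 1 m, d j := by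
        conv_lhs => rw [show m = m - 1 + 1 from by omega]
        rw [Finset.sum_Icc_succ_top (by omega : 1 ≤ m - 1 + 1),
          show m - 1 + 1 = m from by omega]
      have h1 : m + 1 - 1 = m := by omega
      rw [Finset.sum_Icc_succ_top (by omega : 1 ≤ m + 1),
        Finset.sum_Icc_succ_top (by omega : 1 ≤ m + 1), ih, h1, hsplit]
      push_cast
      ring

private lemma icc_eq_range (d : ℕ → ℤ) (k : ℕ) :
    ∑ j ∈ Icc 1 k, d j = (∑ i ∈ Finset.range (k + 1), d i) - d 0 := by
  induction k with
  | zero => simp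
  | succ k ih =>
      rw [Finset.sum_Icc_succ_top (by omega : 1 ≤ k + 1), ih,
        Finset.sum_range_succ d (k + 1)]
      ring

/-- Arithmetic core of Theorem 5.1: Stanley's inequalities together with the
almost Gorenstein equality for a level ring force `h s = 1`. -/
theorem h_top_eq_one_of_stanley_and_AG (s : ℕ) (hs : 2 ≤ s) (h : ℕ → ℤ)
    (h0 : h 0 = 1) (htop : 1 ≤ h s)
    (hineq : ∀ j ≤ s / 2,
      ∑ i ∈ Finset.range (j + 1), h i ≤ ∑ i ∈ Finset.range (j + 1), h (s - i))
    (heq : ((s : ℤ) - 1) * (h s - 1)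
      = ∑ j ∈ Finset.Icc 1 (s / 2), ((s : ℤ) - 2 * j) * (h j - h (s - j))) :
    h s = 1 := by
  set m := s / 2 with hm
  have hm1 : 1 ≤ m := by omega
  have hsm : 2 * m ≤ s := by omega
  set d : ℕ → ℤ := fun j => h j - h (s - j) with hd
  set R : ℕ → ℤ := fun k => ∑ i ∈ Finset.range (k + 1), d i with hR
  have hR0 : ∀ k ≤ m, R k ≤ 0 := by
    intro k hk
    have := hineq k hk
    simp only [hR, hd, Finset.sum_sub_distrib]
    linarith
  have hd0 : d 0 = 1 - h s := by simp [hd, h0]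
  have habel := abel_aux (s : ℤ) d m hm1
  have hIm : ∑ j ∈ Icc 1 m, d j = R m - d 0 := by
    rw [icc_eq_range]
  have hIk : ∀ k, ∑ j ∈ Icc 1 k, d j = R k - d 0 := fun k => icc_eq_range d k
  have hT : ∑ k ∈ Icc 1 (m - 1), ∑ j ∈ Icc 1 k, d j
      = (∑ k ∈ Icc 1 (m - 1), R k) - ((m : ℤ) - 1) * d 0 := by
    rw [Finset.sum_congr rfl fun k _ => hIk k, Finset.sum_sub_distrib,
      Finset.sum_const, Nat.card_Icc, nsmul_eq_mul]
    simp only [Nat.add_sub_cancel]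
    rw [Nat.cast_sub hm1]
    push_cast
    ring
  have heq' : ((s : ℤ) - 1) * (h s - 1)
      = ((s : ℤ) - 2 * m) * (R m - d 0)
        + 2 * ((∑ k ∈ Icc 1 (m - 1), R k) - ((m : ℤ) - 1) * d 0) := by
    rw [heq, habel, hIm, hT]
  have key : h s - 1 = ((s : ℤ) - 2 * m) * R m + 2 * ∑ k ∈ Icc 1 (m - 1), R k := by
    have hd0' : d 0 = 1 - h s := hd0
    nlinarith [heq', hd0']
  have h1 : (0 : ℤ) ≤ (s : ℤ) - 2 * m := by
    have : (2 * m : ℤ) ≤ (s : ℤ) := by exact_mod_cast hsm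
    linarith
  have h2 : ((s : ℤ) - 2 * m) * R m ≤ 0 :=
    mul_nonpos_of_nonneg_of_nonpos h1 (hR0 m le_rfl)
  have h3 : ∑ k ∈ Icc 1 (m - 1), R k ≤ 0 := by
    apply Finset.sum_nonpos
    intro k hk
    exact hR0 k (by simp at hk; omega)
  linarith [key]
end

section
/- Let R be a Cohen–Macaulay semi-standard graded ring admitting a degree-0 injection φ : R → ω_R(−a) with cokernel C, where a = a(R). Then the minimal number of generators of C equals r(R) − 1, where r(R) is the Cohen–Macaulay type of R. -/
/-!
Put `x = φ 1`. It is homogeneous of the lowest degree `-a` of `Ω`, its annihilator is zero, and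
`C = Ω / R x`; so `μ(Ω) ≤ μ(C) + 1` is clear and the point is `μ(C) ≤ μ(Ω) - 1`.

Let `𝔫 = R₊ + nil(R)`. The ring `R / 𝔫` is a reduced quotient of the finite-dimensional algebra
`R₀`, hence a finite product of fields `R / 𝔪ᵢ`, and its idempotents lift to orthogonal
idempotents `eᵢ ∈ R₀`. In degree `-a` only `R₀` acts, so `x ∈ 𝔪ᵢ Ω` would put `eᵢ x` into
`K Ω` for a nilpotent ideal `K ⊆ (eᵢ)`, which is impossible for an element with zero annihilator.
Hence the image of `x` in the `R / 𝔪ᵢ`-vector space `Ω / 𝔪ᵢ Ω` (of dimension `≤ μ(Ω)`) is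
nonzero, and `μ(Ω) - 1` homogeneous elements `f i j` complete it to a spanning set. The
homogeneous submodule spanned by `x` and the `eᵢ • f i j` then exhausts `Ω` modulo `𝔫 Ω`, so it
is all of `Ω` by graded Nakayama (`Ω` is bounded below and `nil(R)` is nilpotent). Since
`eᵢ • ∑ₗ eₗ • f l j = eᵢ • f i j`, the `μ(Ω) - 1` elements `∑ᵢ eᵢ • f i j` generate `C`.
-/

noncomputable section

open Finset PowerSeries

/-- Minimal number of generators of an `R`-module `M`. -/
def muGen (R : Type*) [CommRing R] (M : Type*) [AddCommGroup M] [Module R M] : ℕ :=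
  sInf {n : ℕ | ∃ t : Finset M, t.card = n ∧ Submodule.span R (t : Set M) = ⊤}

open DirectSum HomogeneousIdeal

section NumberOfGenerators

variable {R M : Type*} [CommRing R] [AddCommGroup M] [Module R M]

theorem muGen_le_card (t : Finset M) (ht : Submodule.span R (t : Set M) = ⊤) :
    muGen R M ≤ t.card :=
  Nat.sInf_le ⟨t, rfl, ht⟩

theorem muGen_le_of_span_range_eq_top {n : ℕ} (f : Fin n → M)
    (hf : Submodule.span R (Set.range f) = ⊤) : muGen R M ≤ n := by
  classical
  refine (muGen_le_card (Finset.univ.image f) ?_).trans (Finset.card_image_le.trans_eq ?_)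
  · rwa [Finset.coe_image, Finset.coe_univ, Set.image_univ]
  · simp

variable (R M) in
theorem exists_finset_card_eq_muGen [Module.Finite R M] :
    ∃ t : Finset M, t.card = muGen R M ∧ Submodule.span R (t : Set M) = ⊤ := by
  obtain ⟨t, ht⟩ := Module.Finite.fg_top (R := R) (M := M)
  exact Nat.sInf_mem (s := {n | ∃ t : Finset M, t.card = n ∧ Submodule.span R (t : Set M) = ⊤})
    ⟨t.card, t, rfl, ht⟩

theorem one_le_muGen [Module.Finite R M] [Nontrivial M] : 1 ≤ muGen R M := by
  obtain ⟨t, ht, hspan⟩ := exists_finset_card_eq_muGen R M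
  refine Nat.one_le_iff_ne_zero.mpr fun h0 => ?_
  rw [h0, Finset.card_eq_zero] at ht
  rw [ht, Finset.coe_empty, Submodule.span_empty] at hspan
  exact bot_ne_top hspan

theorem muGen_le_muGen_quotient_add_one [Module.Finite R M] (x : M) :
    muGen R M ≤ muGen R (M ⧸ R ∙ x) + 1 := by
  classical
  obtain ⟨t, ht, hspan⟩ := exists_finset_card_eq_muGen R (M ⧸ R ∙ x)
  choose lift hlift using Submodule.Quotient.mk_surjective (R ∙ x)
  have himage : (R ∙ x).mkQ '' ↑(t.image lift) = ↑t := by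
    ext; simp [hlift]
  refine (muGen_le_card (insert x (t.image lift)) ?_).trans ?_
  · rw [Finset.coe_insert, Submodule.span_insert, ← Submodule.comap_map_mkQ, Submodule.map_span,
      himage, hspan, Submodule.comap_top]
  · rw [← ht]
    exact (Finset.card_insert_le _ _).trans (Nat.succ_le_succ Finset.card_image_le)

theorem span_quotient_smul_top_eq_top (I : Ideal R) {S : Set M}
    (hS : Submodule.span R S = ⊤) :
    Submodule.span (R ⧸ I) ((I • (⊤ : Submodule R M)).mkQ '' S) = ⊤ := by
  rw [← Submodule.restrictScalars_eq_top_iff R,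
    Submodule.restrictScalars_span R _ Ideal.Quotient.mk_surjective, ← Submodule.map_span, hS,
    Submodule.map_top, Submodule.range_mkQ]

theorem finrank_quotient_smul_top_le_muGen [Module.Finite R M] (m : Ideal R) [m.IsMaximal] :
    Module.finrank (R ⧸ m) (M ⧸ m • (⊤ : Submodule R M)) ≤ muGen R M := by
  classical
  obtain ⟨t, ht, hspan⟩ := exists_finset_card_eq_muGen R M
  have := finrank_span_finset_le_card (R := R ⧸ m) (t.image (m • (⊤ : Submodule R M)).mkQ)
  rw [Finset.coe_image, Set.finrank, span_quotient_smul_top_eq_top m hspan, finrank_top] at this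
  exact this.trans (Finset.card_image_le.trans ht.le)

end NumberOfGenerators

theorem exists_fin_mem_span_range_comp_eq_top {K V α : Type*} [Field K] [AddCommGroup V]
    [Module K V] [FiniteDimensional K V] (g : α → V) {S : Set α}
    (hS : Submodule.span K (g '' S) = ⊤) {N : ℕ} (hN : Module.finrank K V ≤ N) {s₀ : α}
    (hs₀ : s₀ ∈ S) :
    ∃ f : Fin N → α, (∀ j, f j ∈ S) ∧ Submodule.span K (Set.range (g ∘ f)) = ⊤ := by
  obtain ⟨v, hvS, hv, -⟩ := Submodule.exists_fun_fin_finrank_span_eq K (g '' S)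
  have hr : Module.finrank K (Submodule.span K (g '' S)) ≤ N := by rwa [hS, finrank_top]
  choose pre hpreS hpre using hvS
  refine ⟨fun j => if h : (j : ℕ) < _ then pre ⟨j, h⟩ else s₀, fun j => ?_, ?_⟩
  · dsimp only; split_ifs <;> simp [hpreS, hs₀]
  · refine eq_top_iff.mpr (hS.symm.trans_le (hv.symm.trans_le (Submodule.span_mono ?_)))
    rintro _ ⟨i, rfl⟩
    exact ⟨Fin.castLE hr i, by simp [hpre]⟩

theorem exists_fin_span_sup_span_singleton_sup_smul_top_eq_top {R M : Type*} [CommRing R]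
    [AddCommGroup M] [Module R M] [Module.Finite R M] (m : Ideal R) [m.IsMaximal] {S : Set M}
    (hS : Submodule.span R S = ⊤) (h0 : 0 ∈ S) {x : M} (hx : x ∉ m • (⊤ : Submodule R M)) :
    ∃ f : Fin (muGen R M - 1) → M, (∀ j, f j ∈ S) ∧
      Submodule.span R (Set.range f) ⊔ R ∙ x ⊔ m • ⊤ = ⊤ := by
  let := Ideal.Quotient.field m
  set P := m • (⊤ : Submodule R M)
  set W := (R ⧸ m) ∙ P.mkQ x
  have hx' : P.mkQ x ≠ 0 := by rwa [Ne, Submodule.mkQ_apply, Submodule.Quotient.mk_eq_zero]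
  have hfin : Module.finrank (R ⧸ m) ((M ⧸ P) ⧸ W) ≤ muGen R M - 1 := by
    have := W.finrank_quotient_add_finrank
    rw [finrank_span_singleton hx'] at this
    have : Module.finrank (R ⧸ m) (M ⧸ P) ≤ muGen R M := finrank_quotient_smul_top_le_muGen m
    omega
  let q : M →ₗ[R] (M ⧸ P) ⧸ W := W.mkQ.restrictScalars R ∘ₗ P.mkQ
  have hq : Submodule.span (R ⧸ m) (q '' S) = ⊤ := by
    rw [LinearMap.coe_comp, Set.image_comp, LinearMap.coe_restrictScalars, ← Submodule.map_span,
      span_quotient_smul_top_eq_top m hS, Submodule.map_top, Submodule.range_mkQ]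
  obtain ⟨f, hfS, hf⟩ := exists_fin_mem_span_range_comp_eq_top q hq hfin h0
  refine ⟨f, hfS, eq_top_iff.mpr fun w _ => ?_⟩
  have hw : q w ∈ (Submodule.span R (Set.range f)).map q := by
    rw [Submodule.map_span, ← Set.range_comp,
      ← Submodule.restrictScalars_span R (R ⧸ m) Ideal.Quotient.mk_surjective, hf]
    trivial
  obtain ⟨y, hy, hqy⟩ := hw
  have hwy : W.mkQ (P.mkQ (w - y)) = 0 := by
    rw [map_sub, map_sub]; exact sub_eq_zero.mpr hqy.symm
  obtain ⟨c, hc⟩ := Submodule.mem_span_singleton.mp ((Submodule.Quotient.mk_eq_zero W).mp hwy)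
  obtain ⟨c, rfl⟩ := Ideal.Quotient.mk_surjective c
  have hP : w - y - c • x ∈ P := by
    rw [← Submodule.Quotient.mk_eq_zero, Submodule.Quotient.mk_sub, ← Submodule.mkQ_apply,
      ← hc, Submodule.mkQ_apply, Module.Quotient.mk_smul_mk, sub_self]
  have hsplit : w = y + c • x + (w - y - c • x) := by abel
  rw [hsplit]
  exact add_mem (add_mem (Submodule.mem_sup_left (Submodule.mem_sup_left hy))
    (Submodule.mem_sup_left (Submodule.mem_sup_right (Submodule.smul_mem _ c
      (Submodule.mem_span_singleton_self x))))) (Submodule.mem_sup_right hP)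

theorem Submodule.sup_pow_smul_top_eq_top {R M : Type*} [CommRing R] [AddCommGroup M] [Module R M]
    {T : Submodule R M} {I : Ideal R} (h : T ⊔ I • ⊤ = ⊤) (n : ℕ) : T ⊔ I ^ n • ⊤ = ⊤ := by
  induction n with
  | zero => rw [pow_zero, Ideal.one_eq_top, Submodule.top_smul, sup_top_eq]
  | succ n ih =>
    refine eq_top_iff.mpr ?_
    calc ⊤ = T ⊔ I ^ n • (T ⊔ I • ⊤) := by rw [h, ih]
      _ ≤ T ⊔ I ^ (n + 1) • ⊤ := by
        rw [Submodule.smul_sup, ← Submodule.mul_smul, ← pow_succ, ← sup_assoc]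
        exact sup_le_sup_right (sup_le le_rfl Submodule.smul_le_right) _

theorem eq_zero_of_mem_smul_top_of_isNilpotent {R M : Type*} [CommRing R] [AddCommGroup M]
    [Module R M] {K : Ideal R} (hK : IsNilpotent K) {y : M} (hy : y ∈ K • (⊤ : Submodule R M))
    (hfaith : ∀ r ∈ K, r • y = 0 → r = 0) : y = 0 := by
  have key (n : ℕ) (hn : K ^ (n + 1) = ⊥) : K = ⊥ := by
    induction n with
    | zero => simpa using hn
    | succ n ih =>
      refine ih (eq_bot_iff.mpr fun r hr => ?_)
      refine (Ideal.mem_bot).mpr (hfaith r (Ideal.pow_le_self n.succ_ne_zero hr) ?_)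
      have : r • y ∈ K ^ (n + 1) • K • (⊤ : Submodule R M) := Submodule.smul_mem_smul hr hy
      rwa [← Submodule.mul_smul, ← pow_succ, hn, Submodule.bot_smul, Submodule.mem_bot] at this
  obtain ⟨n, hn⟩ := hK
  have hK : K = ⊥ := by
    cases n with
    | zero =>
      rw [pow_zero, Ideal.one_eq_top, Ideal.zero_eq_bot] at hn
      exact bot_unique (hn ▸ le_top)
    | succ n => exact key n (by rwa [Ideal.zero_eq_bot] at hn)
  rwa [hK, Submodule.bot_smul, Submodule.mem_bot] at hy

section Idempotents

variable {R M : Type*} [CommRing R] [AddCommGroup M] [Module R M] {ι : Type*} [Fintype ι]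

theorem OrthogonalIdempotents.smul_mem_span_range_sum {e : ι → R} (he : OrthogonalIdempotents e)
    {κ : Type*} (f : ι → κ → M) (i : ι) (j : κ) :
    e i • f i j ∈ Submodule.span R (Set.range fun j => ∑ i, e i • f i j) := by
  classical
  have : e i • ∑ i', e i' • f i' j = e i • f i j := by
    simp only [Finset.smul_sum, smul_smul, he.mul_eq, ite_smul, zero_smul,
      Finset.sum_ite_eq, Finset.mem_univ, if_true]
  exact this ▸ Submodule.smul_mem _ _ (Submodule.subset_span ⟨j, rfl⟩)

theorem OrthogonalIdempotents.muGen_quotient_span_singleton_le {e : ι → R}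
    (he : OrthogonalIdempotents e) {N : ℕ} (f : ι → Fin N → M) (x : M)
    (h : Submodule.span R (insert x (Set.range fun p : ι × Fin N => e p.1 • f p.1 p.2)) = ⊤) :
    muGen R (M ⧸ R ∙ x) ≤ N := by
  refine muGen_le_of_span_range_eq_top (fun j => (R ∙ x).mkQ (∑ i, e i • f i j)) (eq_top_iff.mpr ?_)
  calc ⊤ = (Submodule.span R (insert x (Set.range fun p : ι × Fin N => e p.1 • f p.1 p.2))).map
        (R ∙ x).mkQ := by rw [h, Submodule.map_top, Submodule.range_mkQ]
    _ ≤ (Submodule.span R (Set.range fun j => ∑ i, e i • f i j) ⊔ R ∙ x).map (R ∙ x).mkQ := by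
      refine Submodule.map_mono (Submodule.span_le.mpr ?_)
      rintro _ (hw | ⟨⟨i, j⟩, rfl⟩)
      · rw [hw]
        exact Submodule.mem_sup_right (Submodule.mem_span_singleton_self x)
      · exact Submodule.mem_sup_left (he.smul_mem_span_range_sum f i j)
    _ = _ := by
      rw [Submodule.map_sup, Submodule.mkQ_map_self, sup_bot_eq, Submodule.map_span,
        ← Set.range_comp]
      rfl

theorem sup_smul_top_eq_top_of_sum_eq_one {e : ι → R} (he : ∑ i, e i = 1)
    {T : Submodule R M} {J : Ideal R} {P : ι → Submodule R M} {I : ι → Ideal R}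
    (hP : ∀ i, P i ⊔ I i • ⊤ = ⊤) (hPT : ∀ i, ∀ p ∈ P i, e i • p ∈ T)
    (hIJ : ∀ i, ∀ c ∈ I i, e i * c ∈ J) : T ⊔ J • ⊤ = ⊤ := by
  refine eq_top_iff.mpr fun w _ => ?_
  rw [← one_smul R w, ← he, Finset.sum_smul]
  refine Submodule.sum_mem _ fun i _ => ?_
  obtain ⟨p, hp, y, hy, rfl⟩ := Submodule.mem_sup.mp ((hP i).symm ▸ Submodule.mem_top : w ∈ _)
  rw [smul_add]
  refine add_mem (Submodule.mem_sup_left (hPT i p hp)) (Submodule.mem_sup_right ?_)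
  refine Submodule.smul_induction_on hy (fun c hc z _ => ?_) (fun _ _ h₁ h₂ => ?_)
  · rw [smul_smul]; exact Submodule.smul_mem_smul (hIJ i c hc) Submodule.mem_top
  · rw [smul_add]; exact add_mem h₁ h₂

end Idempotents

theorem exists_completeOrthogonalIdempotents_maximalSpectrum (S : Type*) [CommRing S]
    [IsArtinianRing S] [IsReduced S] [Fintype (MaximalSpectrum S)] :
    ∃ e : MaximalSpectrum S → S, CompleteOrthogonalIdempotents e ∧
      ∀ I, (∀ c ∈ I.asIdeal, e I * c = 0) ∧ e I ∉ I.asIdeal := by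
  classical
  let φ := (IsArtinianRing.equivPi S).symm.toRingEquiv.toRingHom
  refine ⟨fun I => φ (Pi.single I 1), (CompleteOrthogonalIdempotents.single _).map φ,
    fun I => ⟨fun c hc => ?_, fun hI => ?_⟩⟩
  · refine (IsArtinianRing.equivPi S).injective ?_
    rw [map_mul, map_zero]
    ext J
    by_cases hJ : J = I
    · subst hJ
      simp [φ, Ideal.Quotient.eq_zero_iff_mem.mpr hc]
    · simp [φ, Pi.single_eq_of_ne hJ]
  · have h1 := congr_fun ((IsArtinianRing.equivPi S).apply_symm_apply (Pi.single I 1)) I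
    rw [Pi.single_eq_same, IsArtinianRing.equivPi_apply] at h1
    exact zero_ne_one ((Ideal.Quotient.eq_zero_iff_mem.mpr hI).symm.trans h1)

def HasGradedSMul {k R Ω : Type*} [CommRing k] [CommRing R] [Algebra k R] [AddCommGroup Ω]
    [Module R Ω] [Module k Ω] (𝒜 : ℕ → Submodule k R) (ℳ : ℤ → Submodule k Ω) : Prop :=
  ∀ (i : ℕ) (j : ℤ), ∀ r ∈ 𝒜 i, ∀ x ∈ ℳ j, r • x ∈ ℳ (i + j)

section Graded

variable {k R Ω : Type*} [CommRing k] [CommRing R] [AddCommGroup Ω] [Module R Ω] [Module k Ω]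
  {ℳ : ℤ → Submodule k Ω} [Decomposition ℳ] {a : ℤ}

theorem coe_decompose_eq_zero_of_lt (hbot : ∀ n : ℤ, n < -a → ℳ n = ⊥) (w : Ω) {n : ℤ}
    (hn : n < -a) : (decompose ℳ w n : Ω) = 0 := by
  simpa [hbot n hn] using (decompose ℳ w n).2

variable (R ℳ) in
theorem span_isHomogeneousElem_eq_top :
    Submodule.span R {w : Ω | SetLike.IsHomogeneousElem ℳ w} = ⊤ :=
  eq_top_iff.mpr fun w _ => Decomposition.inductionOn ℳ (zero_mem _)
    (fun w => Submodule.subset_span ⟨_, w.2⟩) (fun _ _ => add_mem) w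

variable [Algebra k R] {𝒜 : ℕ → Submodule k R}

theorem coe_decompose_smul_of_mem (hsmul : HasGradedSMul 𝒜 ℳ) {j : ℕ} {r : R} (hr : r ∈ 𝒜 j)
    (w : Ω) (n : ℤ) : (decompose ℳ (r • w) n : Ω) = r • (decompose ℳ w (n - j) : Ω) := by
  induction w using Decomposition.inductionOn ℳ with
  | zero => simp
  | @homogeneous d w =>
    have hrw : r • (w : Ω) ∈ ℳ (j + d) := hsmul j d r hr _ w.2
    by_cases hn : n = j + d
    · rw [hn, decompose_of_mem_same ℳ hrw, add_sub_cancel_left, decompose_of_mem_same ℳ w.2]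
    · rw [decompose_of_mem_ne ℳ hrw (Ne.symm hn),
        decompose_of_mem_ne ℳ w.2 (by omega : d ≠ n - j), smul_zero]
  | add w₁ w₂ ih₁ ih₂ =>
    rw [smul_add, decompose_add, decompose_add, DirectSum.add_apply, DirectSum.add_apply,
      Submodule.coe_add, Submodule.coe_add, ih₁, ih₂, smul_add]

variable [GradedAlgebra 𝒜]

theorem projZeroRingHom_mem (c : R) : GradedRing.projZeroRingHom 𝒜 c ∈ 𝒜 0 := by
  rw [GradedRing.projZeroRingHom_apply]; exact SetLike.coe_mem _

theorem sub_projZeroRingHom_mem_irrelevant (c : R) :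
    c - GradedRing.projZeroRingHom 𝒜 c ∈ 𝒜₊.toIdeal := by
  rw [toIdeal_irrelevant, RingHom.mem_ker, map_sub, sub_eq_zero,
    GradedRing.projZeroRingHom_apply 𝒜 (GradedRing.projZeroRingHom 𝒜 c),
    decompose_of_mem_same 𝒜 (projZeroRingHom_mem c)]

open Classical in
theorem coe_decompose_smul (hsmul : HasGradedSMul 𝒜 ℳ) (c : R) (w : Ω) (n : ℤ) :
    (decompose ℳ (c • w) n : Ω) =
      ∑ j ∈ (decompose 𝒜 c).support, (decompose 𝒜 c j : R) • (decompose ℳ w (n - j) : Ω) := by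
  conv_lhs => rw [← sum_support_decompose 𝒜 c]
  rw [Finset.sum_smul, decompose_sum, DFinsupp.finsetSum_apply, AddSubmonoidClass.coe_finsetSum]
  exact Finset.sum_congr rfl fun j _ => coe_decompose_smul_of_mem hsmul (SetLike.coe_mem _) w n

theorem coe_decompose_smul_eq_zero_of_mem_irrelevant (hsmul : HasGradedSMul 𝒜 ℳ) {c : R}
    (hc : c ∈ 𝒜₊.toIdeal) {w : Ω} {n : ℤ}
    (hw : ∀ i < n, (decompose ℳ w i : Ω) = 0) : ∀ i < n + 1, (decompose ℳ (c • w) i : Ω) = 0 := by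
  classical
  intro i hi
  rw [coe_decompose_smul hsmul]
  refine Finset.sum_eq_zero fun j _ => ?_
  rcases Nat.eq_zero_or_pos j with rfl | hj
  · rw [toIdeal_irrelevant, RingHom.mem_ker, GradedRing.projZeroRingHom_apply] at hc
    rw [hc, zero_smul]
  · rw [hw _ (by omega), smul_zero]

theorem coe_decompose_eq_zero_of_mem_pow_smul_top (hsmul : HasGradedSMul 𝒜 ℳ)
    (hbot : ∀ n : ℤ, n < -a → ℳ n = ⊥) (m : ℕ) {y : Ω}
    (hy : y ∈ 𝒜₊.toIdeal ^ m • (⊤ : Submodule R Ω)) :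
    ∀ i < m - a, (decompose ℳ y i : Ω) = 0 := by
  induction m generalizing y with
  | zero => exact fun i hi => coe_decompose_eq_zero_of_lt hbot y (by omega)
  | succ m ih =>
    rw [pow_succ', Submodule.mul_smul] at hy
    refine Submodule.smul_induction_on hy (fun c hc z hz => ?_) (fun z₁ z₂ h₁ h₂ i hi => ?_)
    · have := coe_decompose_smul_eq_zero_of_mem_irrelevant hsmul hc (ih hz)
      push_cast
      simpa [add_sub_right_comm] using this
    · simp [h₁ i hi, h₂ i hi]

theorem coe_decompose_smul_lowest_degree (hsmul : HasGradedSMul 𝒜 ℳ)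
    (hbot : ∀ n : ℤ, n < -a → ℳ n = ⊥) (c : R) (w : Ω) :
    (decompose ℳ (c • w) (-a) : Ω) =
      GradedRing.projZeroRingHom 𝒜 c • (decompose ℳ w (-a) : Ω) := by
  set c₀ := GradedRing.projZeroRingHom 𝒜 c
  have hpos := coe_decompose_smul_eq_zero_of_mem_irrelevant hsmul
    (sub_projZeroRingHom_mem_irrelevant c) (fun i hi => coe_decompose_eq_zero_of_lt hbot w hi)
    (-a) (by omega)
  have hsplit : c • w = (c - c₀) • w + c₀ • w := by rw [← add_smul, sub_add_cancel]
  rw [hsplit, decompose_add, DirectSum.add_apply, Submodule.coe_add, hpos, zero_add,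
    coe_decompose_smul_of_mem hsmul (projZeroRingHom_mem c), Nat.cast_zero, sub_zero]

theorem isHomogeneous_span (hsmul : HasGradedSMul 𝒜 ℳ) {S : Set Ω}
    (hS : ∀ w ∈ S, SetLike.IsHomogeneousElem ℳ w) : (Submodule.span R S).IsHomogeneous ℳ := by
  classical
  intro n w hw
  induction hw using Submodule.span_induction generalizing n with
  | mem y hy =>
    obtain ⟨d, hd⟩ := hS y hy
    by_cases hdn : d = n
    · rw [← hdn, decompose_of_mem_same ℳ hd]; exact Submodule.subset_span hy
    · rw [decompose_of_mem_ne ℳ hd hdn]; exact zero_mem _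
  | zero => simp
  | add y z _ _ ihy ihz =>
    rw [decompose_add, DirectSum.add_apply, Submodule.coe_add]; exact add_mem (ihy n) (ihz n)
  | smul c y _ ihy =>
    rw [coe_decompose_smul hsmul]
    exact Submodule.sum_mem _ fun j _ => Submodule.smul_mem _ _ (ihy _)

theorem Submodule.IsHomogeneous.eq_top_of_sup_smul_top_eq_top (hsmul : HasGradedSMul 𝒜 ℳ)
    (hbot : ∀ n : ℤ, n < -a → ℳ n = ⊥) {T : Submodule R Ω} (hT : T.IsHomogeneous ℳ)
    {N : Ideal R} (hN : IsNilpotent N) (h : T ⊔ (𝒜₊.toIdeal ⊔ N) • ⊤ = ⊤) : T = ⊤ := by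
  obtain ⟨p, hp⟩ := hN
  have hpow (m : ℕ) : T ⊔ 𝒜₊.toIdeal ^ m • ⊤ = ⊤ := by
    refine top_unique ((Submodule.sup_pow_smul_top_eq_top h (m + p)).symm.trans_le ?_)
    refine sup_le_sup_left (Submodule.smul_mono_left ?_) _
    simpa [hp] using Ideal.sup_pow_add_le_pow_sup_pow (I := 𝒜₊.toIdeal) (J := N) (n := m) (m := p)
  refine eq_top_iff.mpr fun w _ => (hT.mem_iff ℳ).mpr fun n => ?_
  obtain ⟨t, ht, y, hy, rfl⟩ :=
    Submodule.mem_sup.mp ((hpow (n + a + 1).toNat).symm ▸ Submodule.mem_top : w ∈ _)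
  rw [decompose_add, DirectSum.add_apply, Submodule.coe_add,
    coe_decompose_eq_zero_of_mem_pow_smul_top hsmul hbot _ hy n (by omega), add_zero]
  exact hT n ht

theorem map_projZeroRingHom_le_nilradical :
    (𝒜₊.toIdeal ⊔ nilradical R).map (GradedRing.projZeroRingHom 𝒜) ≤ nilradical R := by
  rw [Ideal.map_sup, sup_le_iff, Ideal.map_le_iff_le_comap, Ideal.map_le_iff_le_comap]
  refine ⟨fun c hc => ?_, fun c hc => (mem_nilradical.mp hc).map _⟩
  rw [toIdeal_irrelevant, RingHom.mem_ker] at hc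
  simp [hc]

variable (𝒜) in
def gradeZeroToQuotient : 𝒜 0 →+* R ⧸ (𝒜₊.toIdeal ⊔ nilradical R) :=
  (Ideal.Quotient.mk _).comp (algebraMap (𝒜 0) R)

theorem gradeZeroToQuotient_surjective : Function.Surjective (gradeZeroToQuotient 𝒜) := by
  intro q
  obtain ⟨r, rfl⟩ := Ideal.Quotient.mk_surjective q
  refine ⟨GradedRing.projZeroRingHom' 𝒜 r, (Ideal.Quotient.eq.mpr ?_).symm⟩
  exact Ideal.mem_sup_left (sub_projZeroRingHom_mem_irrelevant r)

theorem isNilpotent_of_mem_ker_gradeZeroToQuotient (c : 𝒜 0)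
    (hc : c ∈ RingHom.ker (gradeZeroToQuotient 𝒜)) : IsNilpotent c := by
  have hc' : (c : R) ∈ 𝒜₊.toIdeal ⊔ nilradical R := Ideal.Quotient.eq_zero_iff_mem.mp hc
  have hp0 : GradedRing.projZeroRingHom 𝒜 c = c := by
    rw [GradedRing.projZeroRingHom_apply, decompose_of_mem_same 𝒜 c.2]
  rw [← IsNilpotent.map_iff (f := algebraMap (𝒜 0) R) Subtype.val_injective, ← mem_nilradical]
  exact map_projZeroRingHom_le_nilradical (hp0 ▸ Ideal.mem_map_of_mem _ hc')

theorem isReduced_quotient_irrelevant_sup_nilradical :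
    IsReduced (R ⧸ (𝒜₊.toIdeal ⊔ nilradical R)) := by
  refine ⟨fun q ⟨n, hn⟩ => ?_⟩
  obtain ⟨c, rfl⟩ := gradeZeroToQuotient_surjective q
  rw [← map_pow] at hn
  have hc : IsNilpotent (algebraMap (𝒜 0) R c) :=
    ((isNilpotent_of_mem_ker_gradeZeroToQuotient _ hn).of_pow).map _
  exact Ideal.Quotient.eq_zero_iff_mem.mpr (Ideal.mem_sup_right (mem_nilradical.mpr hc))

theorem isArtinianRing_quotient_irrelevant_sup_nilradical [IsArtinianRing k]
    [Module.Finite k (𝒜 0)] : IsArtinianRing (R ⧸ (𝒜₊.toIdeal ⊔ nilradical R)) := by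
  have : Module.Finite k (R ⧸ (𝒜₊.toIdeal ⊔ nilradical R)) :=
    Module.Finite.of_surjective ((Ideal.Quotient.mkₐ k _).toLinearMap ∘ₗ (𝒜 0).subtype)
      gradeZeroToQuotient_surjective
  exact IsArtinianRing.of_finite k _

theorem exists_completeOrthogonalIdempotents_gradeZero [IsArtinianRing k] [Module.Finite k (𝒜 0)]
    [Fintype (MaximalSpectrum (R ⧸ (𝒜₊.toIdeal ⊔ nilradical R)))] :
    ∃ e : MaximalSpectrum (R ⧸ (𝒜₊.toIdeal ⊔ nilradical R)) → R,
      CompleteOrthogonalIdempotents e ∧ ∀ I, e I ∈ 𝒜 0 ∧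
        (∀ c ∈ I.asIdeal.comap (Ideal.Quotient.mk _), e I * c ∈ 𝒜₊.toIdeal ⊔ nilradical R) ∧
        e I ∉ I.asIdeal.comap (Ideal.Quotient.mk _) := by
  have := isArtinianRing_quotient_irrelevant_sup_nilradical (𝒜 := 𝒜)
  have := isReduced_quotient_irrelevant_sup_nilradical (𝒜 := 𝒜)
  obtain ⟨ē, hē, hēI⟩ := exists_completeOrthogonalIdempotents_maximalSpectrum
    (R ⧸ (𝒜₊.toIdeal ⊔ nilradical R))
  obtain ⟨e, he, hlift⟩ := hē.lift_of_isNilpotent_ker (gradeZeroToQuotient 𝒜)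
    isNilpotent_of_mem_ker_gradeZeroToQuotient fun _ => gradeZeroToQuotient_surjective _
  refine ⟨algebraMap (𝒜 0) R ∘ e, he.map _, fun I => ⟨(e I).2, fun c hc => ?_, fun h => ?_⟩⟩
  all_goals have hI : Ideal.Quotient.mk _ (e I : R) = ē I := congr_fun hlift I
  · rw [Function.comp_apply, ← Ideal.Quotient.eq_zero_iff_mem, map_mul,
      SetLike.GradeZero.algebraMap_apply, hI]
    exact (hēI I).1 _ hc
  · exact (hēI I).2 (hI ▸ h)

variable {x : Ω}

theorem mem_map_projZeroRingHom_smul_top (hsmul : HasGradedSMul 𝒜 ℳ)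
    (hbot : ∀ n : ℤ, n < -a → ℳ n = ⊥) (hx : x ∈ ℳ (-a)) {I : Ideal R}
    (hxI : x ∈ I • (⊤ : Submodule R Ω)) :
    x ∈ I.map (GradedRing.projZeroRingHom 𝒜) • (⊤ : Submodule R Ω) := by
  rw [← decompose_of_mem_same ℳ hx]
  refine Submodule.smul_induction_on (p := fun z => (decompose ℳ z (-a) : Ω) ∈ _) hxI
    (fun c hc w _ => ?_) (fun y z hy hz => ?_)
  · rw [coe_decompose_smul_lowest_degree hsmul hbot]
    exact Submodule.smul_mem_smul (Ideal.mem_map_of_mem _ hc) Submodule.mem_top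
  · rw [decompose_add, DirectSum.add_apply, Submodule.coe_add]
    exact add_mem hy hz

theorem notMem_smul_top_of_mem_lowest_degree [IsNoetherianRing R] (hsmul : HasGradedSMul 𝒜 ℳ)
    (hbot : ∀ n : ℤ, n < -a → ℳ n = ⊥) (hx : x ∈ ℳ (-a)) (hann : ∀ r : R, r • x = 0 → r = 0)
    {m : Ideal R} {e : R} (he : IsIdempotentElem e) (he₀ : e ∈ 𝒜 0) (hne : e ≠ 0)
    (hem : ∀ c ∈ m, e * c ∈ 𝒜₊.toIdeal ⊔ nilradical R) : x ∉ m • (⊤ : Submodule R Ω) := by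
  intro hxm
  set K := Ideal.span {e} * m.map (GradedRing.projZeroRingHom 𝒜)
  have hKnil : K ≤ nilradical R := by
    have hp0 : GradedRing.projZeroRingHom 𝒜 e = e := by
      rw [GradedRing.projZeroRingHom_apply, decompose_of_mem_same 𝒜 he₀]
    have : K = (Ideal.span {e} * m).map (GradedRing.projZeroRingHom 𝒜) := by
      rw [Ideal.map_mul, Ideal.map_span, Set.image_singleton, hp0]
    rw [this]
    exact (Ideal.map_mono (Ideal.span_singleton_mul_le_iff.mpr hem)).trans
      map_projZeroRingHom_le_nilradical
  have hex : e • x ∈ K • (⊤ : Submodule R Ω) := by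
    rw [Submodule.mul_smul]
    exact Submodule.smul_mem_smul (Ideal.mem_span_singleton_self e)
      (mem_map_projZeroRingHom_smul_top hsmul hbot hx hxm)
  have hK : IsNilpotent K := by
    obtain ⟨n, hn⟩ := IsNoetherianRing.isNilpotent_nilradical R
    refine ⟨n, ?_⟩
    rw [Ideal.zero_eq_bot, ← le_bot_iff]
    rw [Ideal.zero_eq_bot] at hn
    exact hn ▸ Ideal.pow_right_mono hKnil n
  refine hne (hann e (eq_zero_of_mem_smul_top_of_isNilpotent hK hex fun r hr hrx => ?_))
  obtain ⟨s, rfl⟩ := Ideal.mem_span_singleton'.mp (Ideal.mul_le_left hr)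
  rw [smul_smul, mul_assoc, he.eq] at hrx
  exact hann _ hrx

theorem muGen_quotient_span_singleton_le [IsArtinianRing k] [Module.Finite k (𝒜 0)]
    [IsNoetherianRing R] [Module.Finite R Ω] (hsmul : HasGradedSMul 𝒜 ℳ)
    (hbot : ∀ n : ℤ, n < -a → ℳ n = ⊥) (hx : x ∈ ℳ (-a)) (hann : ∀ r : R, r • x = 0 → r = 0) :
    muGen R (Ω ⧸ R ∙ x) ≤ muGen R Ω - 1 := by
  classical
  set 𝔫 := 𝒜₊.toIdeal ⊔ nilradical R
  have := isArtinianRing_quotient_irrelevant_sup_nilradical (𝒜 := 𝒜)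
  have := Fintype.ofFinite (MaximalSpectrum (R ⧸ 𝔫))
  obtain ⟨e, he, he'⟩ := exists_completeOrthogonalIdempotents_gradeZero (𝒜 := 𝒜)
  choose he₀ hem hne using he'
  have hxm (I : MaximalSpectrum (R ⧸ 𝔫)) :
      x ∉ I.asIdeal.comap (Ideal.Quotient.mk 𝔫) • (⊤ : Submodule R Ω) :=
    notMem_smul_top_of_mem_lowest_degree hsmul hbot hx hann (he.idem I) (he₀ I)
      (fun h => hne I (h ▸ zero_mem _)) (hem I)
  have (I : MaximalSpectrum (R ⧸ 𝔫)) := Ideal.comap_isMaximal_of_surjective _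
    Ideal.Quotient.mk_surjective (K := I.asIdeal)
  choose f hfS hf using fun I : MaximalSpectrum (R ⧸ 𝔫) =>
    exists_fin_span_sup_span_singleton_sup_smul_top_eq_top _
      (span_isHomogeneousElem_eq_top R ℳ) ⟨0, zero_mem _⟩ (hxm I)
  set T := Submodule.span R (insert x (Set.range fun p : _ × _ => e p.1 • f p.1 p.2))
  have hT : T.IsHomogeneous ℳ := by
    refine isHomogeneous_span hsmul ?_
    rintro _ (rfl | ⟨⟨I, j⟩, rfl⟩)
    · exact ⟨_, hx⟩
    · obtain ⟨d, hd⟩ := hfS I j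
      exact ⟨_, hsmul 0 d _ (he₀ I) _ hd⟩
  have hTtop : T = ⊤ := by
    refine hT.eq_top_of_sup_smul_top_eq_top hsmul hbot (IsNoetherianRing.isNilpotent_nilradical R)
      (sup_smul_top_eq_top_of_sum_eq_one he.complete hf (fun I => ?_) hem)
    have hle : Submodule.span R (Set.range (f I)) ⊔ R ∙ x ≤ T.comap (LinearMap.lsmul R Ω (e I)) :=
      sup_le (Submodule.span_le.mpr (Set.range_subset_iff.mpr fun j =>
          Submodule.subset_span (Or.inr ⟨(I, j), rfl⟩)))
        ((Submodule.span_singleton_le_iff_mem _ _).mpr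
          (T.smul_mem _ (Submodule.subset_span (Or.inl rfl))))
    exact fun p hp => hle hp
  exact he.toOrthogonalIdempotents.muGen_quotient_span_singleton_le f x hTtop

end Graded

theorem muGen_coker_eq_type_sub_one_general
(k : Type*) [Field k] (R : Type*) [CommRing R] [Algebra k R]
    (𝒜 : ℕ → Submodule k R) [GradedAlgebra 𝒜]
    (hfd : ∀ i, FiniteDimensional k (𝒜 i))
    (hnoeth : IsNoetherianRing R)
    -- the canonical module `Ω = ω_R`, a finitely generated graded `R`-module with
    -- `a(R) = a` and Hilbert series `(∑ h (s−j) t^{j−a}) / (1−t)^d`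
    (Ω : Type*) [AddCommGroup Ω] [Module R Ω] [Module k Ω]
    (ℳ : ℤ → Submodule k Ω) [DirectSum.Decomposition ℳ]
    (hsmul : ∀ (i : ℕ) (j : ℤ), ∀ r ∈ 𝒜 i, ∀ x ∈ ℳ j, r • x ∈ ℳ (i + j))
    (hΩfg : Module.Finite R Ω)
    (a : ℤ) (hbot : ∀ n : ℤ, n < -a → ℳ n = ⊥) (hne : ℳ (-a) ≠ ⊥)
    -- condition (4.2): a degree-0 injection `φ : R → ω_R(−a)`
    (φ : R →ₗ[R] Ω) (hφinj : Function.Injective φ)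
    (hφdeg : ∀ (n : ℕ), ∀ x ∈ 𝒜 n, φ x ∈ ℳ ((n : ℤ) - a)) :
    (muGen R (Ω ⧸ LinearMap.range φ) : ℤ) = (muGen R Ω : ℤ) - 1 := by
  have := hfd 0
  have hx : φ 1 ∈ ℳ (-a) := by simpa using hφdeg 0 1 (SetLike.one_mem_graded 𝒜)
  have hφ : φ = LinearMap.toSpanSingleton R Ω (φ 1) := LinearMap.ext_ring (by simp)
  have hann (r : R) (hr : r • φ 1 = 0) : r = 0 :=
    hφinj (by rw [hφ, LinearMap.toSpanSingleton_apply, hr, map_zero])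
  obtain ⟨w, -, hw⟩ := Submodule.exists_mem_ne_zero_of_ne_bot hne
  have := nontrivial_of_ne w 0 hw
  have hle := muGen_quotient_span_singleton_le hsmul hbot hx hann
  have hge := muGen_le_muGen_quotient_add_one (R := R) (φ 1)
  have hpos := one_le_muGen (R := R) (M := Ω)
  rw [hφ, ← LinearMap.span_singleton_eq_range]
  omega

/-- Theorem 4.5(1): for a Cohen–Macaulay semi-standard graded ring `R` with canonical
module `Ω` and a degree-0 injection `φ : R → ω_R(−a)` with cokernel `C`, the minimal
number of generators of `C` equals `r(R) − 1`, where `r(R) = μ(ω_R)` is the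
Cohen–Macaulay type. -/
theorem muGen_coker_eq_type_sub_one
(k : Type*) [Field k] (R : Type*) [CommRing R] [Algebra k R]
    (𝒜 : ℕ → Submodule k R) [GradedAlgebra 𝒜]
    (hfd : ∀ i, FiniteDimensional k (𝒜 i))
    (hnoeth : IsNoetherianRing R)
    -- semi-standard graded: `R` is a finite module over `k[R₁]`
    (hss : Module.Finite (Algebra.adjoin k ((𝒜 1 : Submodule k R) : Set R)) R)
    (d s : ℕ) (h : ℕ → ℤ) (hhs : h s ≠ 0)
    (hdim : ringKrullDim R = d)
    -- the `h`-vector: Hilbert series of `R` is `(∑ h j t^j) / (1−t)^d`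
    (hHS : (PowerSeries.mk fun i => (Module.finrank k (𝒜 i) : ℤ)) * (1 - PowerSeries.X) ^ d
      = ∑ j ∈ Finset.range (s + 1), PowerSeries.C (h j) * PowerSeries.X ^ j)
    -- `R` is Cohen–Macaulay: a regular sequence of length `d` in the graded maximal ideal
    (hCM : ∃ rs : List R, RingTheory.Sequence.IsRegular R rs ∧
      (∀ r ∈ rs, r ∈ (HomogeneousIdeal.irrelevant 𝒜).toIdeal) ∧ rs.length = d)
    -- the canonical module `Ω = ω_R`, a finitely generated graded `R`-module with
    -- `a(R) = a` and Hilbert series `(∑ h (s−j) t^{j−a}) / (1−t)^d`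
    (Ω : Type*) [AddCommGroup Ω] [Module R Ω] [Module k Ω] [IsScalarTower k R Ω]
    (ℳ : ℤ → Submodule k Ω) [DirectSum.Decomposition ℳ]
    (hsmul : ∀ (i : ℕ) (j : ℤ), ∀ r ∈ 𝒜 i, ∀ x ∈ ℳ j, r • x ∈ ℳ (i + j))
    (hΩfg : Module.Finite R Ω)
    (a : ℤ) (hbot : ∀ n : ℤ, n < -a → ℳ n = ⊥) (hne : ℳ (-a) ≠ ⊥)
    (hΩfd : ∀ n : ℤ, FiniteDimensional k (ℳ n))
    (hΩHS : (PowerSeries.mk fun i : ℕ => (Module.finrank k (ℳ ((i : ℤ) - a)) : ℤ))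
        * (1 - PowerSeries.X) ^ d
      = ∑ j ∈ Finset.range (s + 1), PowerSeries.C (h (s - j)) * PowerSeries.X ^ j)    -- condition (4.2): a degree-0 injection `φ : R → ω_R(−a)`
    (φ : R →ₗ[R] Ω) (hφinj : Function.Injective φ)
    (hφdeg : ∀ (n : ℕ), ∀ x ∈ 𝒜 n, φ x ∈ ℳ ((n : ℤ) - a)) :
    (muGen R (Ω ⧸ LinearMap.range φ) : ℤ) = (muGen R Ω : ℤ) - 1 :=
  muGen_coker_eq_type_sub_one_general k R 𝒜 hfd hnoeth Ω ℳ hsmul hΩfg a hbot hne φ hφinj hφdeg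
end
end

section
/- Let R be a Cohen–Macaulay semi-standard graded ring of dimension d admitting a degree-0 injection φ : R → ω_R(−a) with cokernel C, where a = a(R), and let (h_0, …, h_s) be the h-vector of R. Then the Hilbert series of C equals (Σ_{j=0}^{s−1} ((h_s + ⋯ + h_{s−j}) − (h_0 + ⋯ + h_j)) t^j) / (1−t)^{d−1}. In particular, e(C) = Σ_{j=0}^{s−1} ((h_s + ⋯ + h_{s−j}) − (h_0 + ⋯ + h_j)). -/
/-!
The cokernel `C` of `φ : R → ω_R(−a)` has Hilbert function `dim ω_R(−a)_i − dim R_i`, so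
`(1−t)^d HS(C) = ∑ (h_{s−j} − h_j) t^j`. The coefficients of this numerator sum to zero, and a
polynomial `N` with `N(1) = 0` is `(1−t)` times the polynomial of partial sums of its coefficients;
dividing by the unit `1−t` gives the numerator over `(1−t)^{d−1}`. When `d = 0` there is nothing to
divide, but then the numerator is the Hilbert series of `C` itself, whose coefficients are
nonnegative and sum to zero, so everything vanishes.
-/

noncomputable section

open Finset PowerSeries

/-- `e` is the multiplicity of a graded object of dimension `dm` with Hilbert function
`H`: the Hilbert series `∑ H(i) t^i` equals a polynomial numerator over `(1−t)^dm`,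
and `e` is the sum of the numerator coefficients. -/
def IsMultOf (H : ℕ → ℤ) (dm : ℕ) (e : ℤ) : Prop :=
  ∃ P : Polynomial ℤ,
    (PowerSeries.mk H) * (1 - PowerSeries.X) ^ dm = (P : PowerSeries ℤ) ∧ P.eval 1 = e

namespace PowerSeries

variable {R : Type*} [CommRing R]

theorem isUnit_one_sub_X : IsUnit (1 - X : R⟦X⟧) :=
  isUnit_iff_constantCoeff.mpr (by simp)

theorem coeff_sum_C_mul_X_pow (g : ℕ → R) (m n : ℕ) :
    coeff n (∑ j ∈ range m, C (g j) * X ^ j) = if n < m then g n else 0 := by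
  simp only [map_sum, coeff_C_mul_X_pow, Finset.sum_ite_eq, mem_range]

theorem coe_sum_C_mul_X_pow (g : ℕ → R) (m : ℕ) :
    ((∑ j ∈ range m, Polynomial.C (g j) * Polynomial.X ^ j : Polynomial R) : R⟦X⟧)
      = ∑ j ∈ range m, C (g j) * X ^ j := by
  rw [← Polynomial.coeToPowerSeries.ringHom_apply]
  simp only [map_sum, map_mul, map_pow, Polynomial.coeToPowerSeries.ringHom_apply,
    Polynomial.coe_C, Polynomial.coe_X]

theorem one_sub_X_mul_sum_partial_sums (g : ℕ → R) (s : ℕ) :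
    (1 - X) * ∑ j ∈ range s, C (∑ i ∈ range (j + 1), g i) * X ^ j
      = ∑ j ∈ range (s + 1), C (g j) * X ^ j - C (∑ i ∈ range (s + 1), g i) * X ^ s := by
  induction s with
  | zero => simp
  | succ n ih =>
    simp only [Finset.sum_range_succ, map_add] at ih ⊢
    linear_combination ih

theorem sum_C_mul_X_pow_eq_zero_of_nonneg [PartialOrder R] [IsOrderedRing R] {g : ℕ → R}
    {m : ℕ} (hg0 : ∀ j ∈ range m, 0 ≤ g j) (hg : ∑ j ∈ range m, g j = 0) :
    ∑ j ∈ range m, C (g j) * X ^ j = 0 :=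
  Finset.sum_eq_zero fun j hj => by
    rw [(Finset.sum_eq_zero_iff_of_nonneg hg0).mp hg j hj, map_zero, zero_mul]

theorem mul_one_sub_X_pow_pred_eq_sum_partial_sums [PartialOrder R] [IsOrderedRing R]
    {F : R⟦X⟧} {d s : ℕ} {g : ℕ → R}
    (hF : F * (1 - X) ^ d = ∑ j ∈ range (s + 1), C (g j) * X ^ j)
    (hg : ∑ j ∈ range (s + 1), g j = 0) (hF0 : ∀ n, 0 ≤ coeff n F) :
    F * (1 - X) ^ (d - 1) = ∑ j ∈ range s, C (∑ i ∈ range (j + 1), g i) * X ^ j := by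
  have hnum := one_sub_X_mul_sum_partial_sums g s
  rw [hg, map_zero, zero_mul, sub_zero, ← hF] at hnum
  refine isUnit_one_sub_X.mul_left_cancel ?_
  rcases d with _ | d
  · rw [pow_zero, mul_one] at hF
    have hg0 : ∀ j ∈ range (s + 1), 0 ≤ g j := fun j hj => by
      simpa [hF, coeff_sum_C_mul_X_pow, mem_range.mp hj] using hF0 j
    rw [hnum, pow_zero, mul_one, hF, sum_C_mul_X_pow_eq_zero_of_nonneg hg0 hg, mul_zero]
  · rw [hnum, Nat.add_sub_cancel, pow_succ]
    ring

end PowerSeries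

theorem isMultOf_of_mul_one_sub_X_pow_eq {H : ℕ → ℤ} {dm m : ℕ} {c : ℕ → ℤ}
    (hH : mk H * (1 - X) ^ dm = ∑ j ∈ range m, C (c j) * X ^ j) :
    IsMultOf H dm (∑ j ∈ range m, c j) :=
  ⟨∑ j ∈ range m, Polynomial.C (c j) * Polynomial.X ^ j, by rw [coe_sum_C_mul_X_pow, hH],
    by simp [Polynomial.eval_finsetSum]⟩

theorem Submodule.finrank_le_finrank_of_injective_of_mapsTo {K M N : Type*} [Ring K]
    [StrongRankCondition K] [AddCommGroup M] [Module K M] [AddCommGroup N] [Module K N]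
    {f : M →ₗ[K] N} (hf : Function.Injective f) {p : Submodule K M} {q : Submodule K N}
    [Module.Finite K q] (hpq : ∀ x ∈ p, f x ∈ q) :
    Module.finrank K p ≤ Module.finrank K q :=
  LinearMap.finrank_le_finrank_of_injective (f := f.restrict hpq)
    fun _ _ hxy => Subtype.ext (hf (congrArg Subtype.val hxy))

theorem hilbert_series_coker_general
(k : Type*) [Field k] (R : Type*) [CommRing R] [Algebra k R]
    (𝒜 : ℕ → Submodule k R)
    (d s : ℕ) (h : ℕ → ℤ)
    -- the `h`-vector: Hilbert series of `R` is `(∑ h j t^j) / (1−t)^d`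
    (hHS : (PowerSeries.mk fun i => (Module.finrank k (𝒜 i) : ℤ)) * (1 - PowerSeries.X) ^ d
      = ∑ j ∈ Finset.range (s + 1), PowerSeries.C (R := ℤ) (h j) * PowerSeries.X ^ j)
    -- the canonical module `Ω = ω_R`, a finitely generated graded `R`-module with
    -- `a(R) = a` and Hilbert series `(∑ h (s−j) t^{j−a}) / (1−t)^d`
    (Ω : Type*) [AddCommGroup Ω] [Module R Ω] [Module k Ω] [IsScalarTower k R Ω]
    (ℳ : ℤ → Submodule k Ω)
    (a : ℤ)
    (hΩfd : ∀ n : ℤ, FiniteDimensional k (ℳ n))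
    (hΩHS : (PowerSeries.mk fun i : ℕ => (Module.finrank k (ℳ ((i : ℤ) - a)) : ℤ))
        * (1 - PowerSeries.X) ^ d
      = ∑ j ∈ Finset.range (s + 1), PowerSeries.C (R := ℤ) (h (s - j)) * PowerSeries.X ^ j)    -- condition (4.2): a degree-0 injection `φ : R → ω_R(−a)`
    (φ : R →ₗ[R] Ω) (hφinj : Function.Injective φ)
    (hφdeg : ∀ (n : ℕ), ∀ x ∈ 𝒜 n, φ x ∈ ℳ ((n : ℤ) - a)) :
    ((PowerSeries.mk fun i : ℕ =>
        (Module.finrank k (ℳ ((i : ℤ) - a)) : ℤ) - (Module.finrank k (𝒜 i) : ℤ))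
      * (1 - PowerSeries.X) ^ (d - 1)
      = ∑ j ∈ Finset.range s,
          PowerSeries.C (R := ℤ) (∑ i ∈ Finset.range (j + 1), (h (s - i) - h i))
            * PowerSeries.X ^ j) ∧
    IsMultOf
      (fun i : ℕ =>
        (Module.finrank k (ℳ ((i : ℤ) - a)) : ℤ) - (Module.finrank k (𝒜 i) : ℤ))
      (d - 1)
      (∑ j ∈ Finset.range s, ∑ i ∈ Finset.range (j + 1), (h (s - i) - h i)) := by
  set H : ℕ → ℤ := fun i =>
    (Module.finrank k (ℳ ((i : ℤ) - a)) : ℤ) - (Module.finrank k (𝒜 i) : ℤ)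
  have hnum : mk H * (1 - X) ^ d = ∑ j ∈ range (s + 1), C (h (s - j) - h j) * X ^ j := by
    have hsplit : mk H = mk (fun i : ℕ => (Module.finrank k (ℳ ((i : ℤ) - a)) : ℤ))
        - mk (fun i => (Module.finrank k (𝒜 i) : ℤ)) := by
      ext; simp [H]
    simp only [hsplit, sub_mul, hΩHS, hHS, map_sub, Finset.sum_sub_distrib]
  have hsum : ∑ j ∈ range (s + 1), (h (s - j) - h j) = 0 := by
    rw [Finset.sum_sub_distrib, ← Finset.sum_range_reflect h, Nat.add_sub_cancel, sub_self]
  have hcoker_nonneg : ∀ n, 0 ≤ coeff n (mk H) := fun n => by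
    simpa [H] using Submodule.finrank_le_finrank_of_injective_of_mapsTo
      (f := φ.restrictScalars k) hφinj (hφdeg n)
  have hmain := mul_one_sub_X_pow_pred_eq_sum_partial_sums hnum hsum hcoker_nonneg
  exact ⟨hmain, isMultOf_of_mul_one_sub_X_pow_eq hmain⟩

/-- Theorem 4.5(2): for a Cohen–Macaulay semi-standard graded ring `R` of dimension `d`
with `h`-vector `(h 0, …, h s)`, canonical module `Ω` and a degree-0 injection
`φ : R → ω_R(−a)` with cokernel `C`, the Hilbert series of `C` is
`(∑_{j=0}^{s−1} ((h s + ⋯ + h (s−j)) − (h 0 + ⋯ + h j)) t^j) / (1−t)^{d−1}`; in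
particular `e(C) = ∑_{j=0}^{s−1} ((h s + ⋯ + h (s−j)) − (h 0 + ⋯ + h j))`. -/
theorem hilbert_series_coker
(k : Type*) [Field k] (R : Type*) [CommRing R] [Algebra k R]
    (𝒜 : ℕ → Submodule k R) [GradedAlgebra 𝒜]
    (hfd : ∀ i, FiniteDimensional k (𝒜 i))
    (hnoeth : IsNoetherianRing R)
    -- semi-standard graded: `R` is a finite module over `k[R₁]`
    (hss : Module.Finite (Algebra.adjoin k ((𝒜 1 : Submodule k R) : Set R)) R)
    (d s : ℕ) (h : ℕ → ℤ) (hhs : h s ≠ 0)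
    (hdim : ringKrullDim R = d)
    -- the `h`-vector: Hilbert series of `R` is `(∑ h j t^j) / (1−t)^d`
    (hHS : (PowerSeries.mk fun i => (Module.finrank k (𝒜 i) : ℤ)) * (1 - PowerSeries.X) ^ d
      = ∑ j ∈ Finset.range (s + 1), PowerSeries.C (R := ℤ) (h j) * PowerSeries.X ^ j)
    -- `R` is Cohen–Macaulay: a regular sequence of length `d` in the graded maximal ideal
    (hCM : ∃ rs : List R, RingTheory.Sequence.IsRegular R rs ∧
      (∀ r ∈ rs, r ∈ (HomogeneousIdeal.irrelevant 𝒜).toIdeal) ∧ rs.length = d)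
    -- the canonical module `Ω = ω_R`, a finitely generated graded `R`-module with
    -- `a(R) = a` and Hilbert series `(∑ h (s−j) t^{j−a}) / (1−t)^d`
    (Ω : Type*) [AddCommGroup Ω] [Module R Ω] [Module k Ω] [IsScalarTower k R Ω]
    (ℳ : ℤ → Submodule k Ω) [DirectSum.Decomposition ℳ]
    (hsmul : ∀ (i : ℕ) (j : ℤ), ∀ r ∈ 𝒜 i, ∀ x ∈ ℳ j, r • x ∈ ℳ (i + j))
    (hΩfg : Module.Finite R Ω)
    (a : ℤ) (hbot : ∀ n : ℤ, n < -a → ℳ n = ⊥) (hne : ℳ (-a) ≠ ⊥)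
    (hΩfd : ∀ n : ℤ, FiniteDimensional k (ℳ n))
    (hΩHS : (PowerSeries.mk fun i : ℕ => (Module.finrank k (ℳ ((i : ℤ) - a)) : ℤ))
        * (1 - PowerSeries.X) ^ d
      = ∑ j ∈ Finset.range (s + 1), PowerSeries.C (R := ℤ) (h (s - j)) * PowerSeries.X ^ j)    -- condition (4.2): a degree-0 injection `φ : R → ω_R(−a)`
    (φ : R →ₗ[R] Ω) (hφinj : Function.Injective φ)
    (hφdeg : ∀ (n : ℕ), ∀ x ∈ 𝒜 n, φ x ∈ ℳ ((n : ℤ) - a)) :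
    ((PowerSeries.mk fun i : ℕ =>
        (Module.finrank k (ℳ ((i : ℤ) - a)) : ℤ) - (Module.finrank k (𝒜 i) : ℤ))
      * (1 - PowerSeries.X) ^ (d - 1)
      = ∑ j ∈ Finset.range s,
          PowerSeries.C (R := ℤ) (∑ i ∈ Finset.range (j + 1), (h (s - i) - h i))
            * PowerSeries.X ^ j) ∧
    IsMultOf
      (fun i : ℕ =>
        (Module.finrank k (ℳ ((i : ℤ) - a)) : ℤ) - (Module.finrank k (𝒜 i) : ℤ))
      (d - 1)
      (∑ j ∈ Finset.range s, ∑ i ∈ Finset.range (j + 1), (h (s - i) - h i)) :=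
  hilbert_series_coker_general k R 𝒜 d s h hHS Ω ℳ a hΩfd hΩHS φ hφinj hφdeg
end
end

section
/- Let d ≥ 2 and let S be a pointed affine semigroup in ℤ^d of full dimension d with normalization S̄ = ℤS ∩ ℝ_{≥0}S. Suppose every family of holes of S has dimension at least 1 (equivalently depth k[S] ≥ 2), and suppose v, v′ ∈ S with v′ − v ∈ S̄ \ S. Then there exists a face F of S of dimension ≥ 1 with an extremal ray l of F such that (v′ − v + ℤl) ∩ S = ∅. -/
/-!
The hole hypothesis already supplies a face `F` of positive dimension with
`(v' - v + ℤF) ∩ S = ∅`; it remains to find an extremal ray `l` of `F`, since `ℤl ⊆ ℤF`.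
`F` is generated by the generators of `S` lying in it, so its rational cone is a salient
polyhedral cone. In an inclusion-minimal generating set of that cone every nonzero
generator spans a face, and pulling that ray back to `F` gives `l`.
-/

def IsFaceOfSemigroup {d : ℕ} (S F : AddSubmonoid (Fin d → ℤ)) : Prop :=
  (F : Set (Fin d → ℤ)) ⊆ S ∧
    ∀ a ∈ S, ∀ b ∈ S, (a + b ∈ F ↔ a ∈ F ∧ b ∈ F)

open PointedCone

theorem AddSubmonoid.exists_nsmul_mem_of_mem_hull {V : Type*} [AddCommGroup V] [Module ℚ V]
    (T : AddSubmonoid V) {x : V} (hx : x ∈ hull ℚ (T : Set V)) :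
    ∃ n : ℕ, 0 < n ∧ n • x ∈ T := by
  induction hx using Submodule.span_induction with
  | mem x hx => exact ⟨1, one_pos, by simpa⟩
  | zero => exact ⟨1, one_pos, by simp⟩
  | add x y _ _ hx hy =>
    obtain ⟨n, hn, hnx⟩ := hx
    obtain ⟨m, hm, hmy⟩ := hy
    refine ⟨m * n, Nat.mul_pos hm hn, ?_⟩
    rw [smul_add, mul_nsmul', mul_nsmul]
    exact add_mem (nsmul_mem hnx m) (nsmul_mem hmy n)
  | smul c x _ hx =>
    obtain ⟨n, hn, hnx⟩ := hx
    refine ⟨(c : ℚ).den * n, Nat.mul_pos (c : ℚ).den_pos hn, ?_⟩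
    have hnum : ((c : ℚ).num.toNat : ℚ) = c * (c : ℚ).den := by
      rw [Rat.mul_den_eq_num]; exact_mod_cast Int.toNat_of_nonneg (Rat.num_nonneg.mpr c.2)
    have : ((c : ℚ).den * n) • (c • x) = (c : ℚ).num.toNat • (n • x) := by
      rw [← Nat.cast_smul_eq_nsmul ℚ, ← Nat.cast_smul_eq_nsmul ℚ, ← Nat.cast_smul_eq_nsmul ℚ,
        ← Nonneg.coe_smul, smul_smul, smul_smul, hnum]
      push_cast; ring_nf
    rw [this]
    exact nsmul_mem hnx _

theorem AddSubmonoid.lineal_hull_map_eq_bot {M V : Type*} [AddCommGroup M] [AddCommGroup V]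
    [Module ℚ V] (T : AddSubmonoid M) (hT : ∀ a ∈ T, -a ∈ T → a = 0) (f : M →+ V)
    (hf : Function.Injective f) : (hull ℚ (T.map f : Set V)).lineal = ⊥ := by
  refine eq_bot_iff.mpr fun x hxl => ?_
  obtain ⟨hx, hnx⟩ := PointedCone.mem_lineal.mp hxl
  obtain ⟨n, hn, a, ha, hax⟩ := (T.map f).exists_nsmul_mem_of_mem_hull hx
  obtain ⟨m, hm, b, hb, hbx⟩ := (T.map f).exists_nsmul_mem_of_mem_hull hnx
  have hab : m • a = -(n • b) := by
    apply hf
    simp only [map_nsmul, map_neg, hax, hbx, smul_neg, smul_smul, mul_comm, neg_neg]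
  have hma : m • a = 0 := hT _ (nsmul_mem ha m) (by rw [hab, neg_neg]; exact nsmul_mem hb n)
  have hmnx : ((m * n : ℕ) : ℚ) • x = 0 := by
    rw [Nat.cast_smul_eq_nsmul, mul_nsmul', ← hax, ← map_nsmul, hma, map_zero]
  exact (smul_eq_zero.mp hmnx).resolve_left (by positivity)

section

variable {𝕜 E : Type*} [Field 𝕜] [LinearOrder 𝕜] [IsStrictOrderedRing 𝕜]
  [AddCommGroup E] [Module 𝕜 E]

/-- Write `x = a • u + x'` and `y = b • u + y'` with `x', y'` in the hull of the other
generators. If `x + y = c • u` with `c > a + b`, then `u` lies in that hull; otherwise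
`x' + (y' + (a + b - c) • u) = 0`, so `x' = 0` by salience. -/
theorem PointedCone.isFaceOf_hull_singleton_of_notMem_hull_erase [DecidableEq E]
    {t : Finset E} {u : E}
    (hut : u ∈ t) (hsal : (hull 𝕜 (t : Set E)).lineal = ⊥)
    (hirred : u ∉ hull 𝕜 ((t.erase u : Finset E) : Set E)) :
    (hull 𝕜 {u}).IsFaceOf (hull 𝕜 (t : Set E)) := by
  refine .of_mem_of_add_mem_left
    (Submodule.span_le.mpr (by simpa using Submodule.subset_span hut)) ?_
  have ht : (t : Set E) = insert u ↑(t.erase u) := by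
    rw [← Finset.coe_insert, Finset.insert_erase hut]
  have hsub : hull 𝕜 ((t.erase u : Finset E) : Set E) ≤ hull 𝕜 (t : Set E) :=
    Submodule.span_mono (by simp)
  intro x y hx hy hxy
  rw [ht, Submodule.mem_span_insert] at hx hy
  obtain ⟨a, x', hx', rfl⟩ := hx
  obtain ⟨b, y', hy', rfl⟩ := hy
  obtain ⟨c, hc⟩ := Submodule.mem_span_singleton.mp hxy
  have hsum : x' + y' = ((c : 𝕜) - a - b) • u := by
    simp only [sub_smul, Nonneg.coe_smul, hc]; abel
  rcases lt_or_ge ((a : 𝕜) + b) c with hlt | hge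
  · refine (hirred ?_).elim
    have hpos : 0 ≤ ((c : 𝕜) - a - b)⁻¹ := inv_nonneg.mpr (by linarith)
    have := smul_mem _ hpos (add_mem hx' hy')
    rwa [hsum, smul_smul, inv_mul_cancel₀ (by linarith), one_smul] at this
  · have hneg : -x' = y' + ((a : 𝕜) + b - c) • u := by
      rw [neg_eq_iff_add_eq_zero, ← add_assoc, hsum, ← add_smul,
        show (c : 𝕜) - a - b + (a + b - c) = 0 by ring, zero_smul]
    have hx'0 : x' ∈ (hull 𝕜 (t : Set E)).lineal := by
      refine PointedCone.mem_lineal.mpr ⟨hsub hx', ?_⟩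
      rw [hneg]
      exact add_mem (hsub hy') (smul_mem _ (by linarith) (Submodule.subset_span
        (by rw [ht]; exact Set.mem_insert u _)))
    rw [hsal, Submodule.mem_bot] at hx'0
    simp [hx'0, Submodule.smul_mem _ _ (Submodule.mem_span_singleton_self u)]

theorem PointedCone.exists_mem_isFaceOf_hull_singleton (s : Finset E)
    (hsal : (hull 𝕜 (s : Set E)).lineal = ⊥) (hne : hull 𝕜 (s : Set E) ≠ ⊥) :
    ∃ u ∈ s, u ≠ 0 ∧ (hull 𝕜 {u}).IsFaceOf (hull 𝕜 (s : Set E)) := by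
  classical
  obtain ⟨t, hts, hspan, hmin⟩ := exists_minimal_le_of_wellFoundedLT
    (fun t : Finset E => hull 𝕜 (t : Set E) = hull 𝕜 (s : Set E)) s rfl
  rw [← hspan] at hsal hne ⊢
  obtain ⟨u, hut, hu0⟩ : ∃ u ∈ t, u ≠ 0 := by
    by_contra! h
    exact hne (Submodule.span_eq_bot.mpr h)
  refine ⟨u, hts hut, hu0, isFaceOf_hull_singleton_of_notMem_hull_erase hut hsal fun hu => ?_⟩
  have hle : hull 𝕜 (t : Set E) ≤ hull 𝕜 ((t.erase u : Finset E) : Set E) :=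
    Submodule.span_le.mpr fun x hx => by
      by_cases hxu : x = u
      · exact hxu ▸ hu
      · exact Submodule.subset_span (Finset.mem_erase.mpr ⟨hxu, hx⟩)
  have hspan' : hull 𝕜 ((t.erase u : Finset E) : Set E) = hull 𝕜 (s : Set E) :=
    (le_antisymm (Submodule.span_mono (by simp)) hle).trans hspan
  exact Finset.notMem_erase u t (hmin hspan' (Finset.erase_subset u t) hut)

end

theorem IsFaceOfSemigroup.closure_inter_eq {d : ℕ} {S F : AddSubmonoid (Fin d → ℤ)}
    (hF : IsFaceOfSemigroup S F) {G : Set (Fin d → ℤ)} (hG : AddSubmonoid.closure G = S) :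
    AddSubmonoid.closure (G ∩ F) = F := by
  refine le_antisymm (AddSubmonoid.closure_le.mpr Set.inter_subset_right) fun x hxF => ?_
  have hxS : x ∈ AddSubmonoid.closure G := hG ▸ hF.1 hxF
  induction hxS using AddSubmonoid.closure_induction with
  | mem g hg => exact AddSubmonoid.subset_closure ⟨hg, hxF⟩
  | zero => exact zero_mem _
  | add a b ha hb iha ihb =>
    rw [hG] at ha hb
    obtain ⟨haF, hbF⟩ := (hF.2 a ha b hb).mp hxF
    exact add_mem (iha haF) (ihb hbF)

theorem AddSubmonoid.exists_isFaceOfSemigroup_ray {d : ℕ} (T : AddSubmonoid (Fin d → ℤ))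
    (G : Finset (Fin d → ℤ)) (hG : AddSubmonoid.closure (G : Set (Fin d → ℤ)) = T)
    (hT : ∀ a ∈ T, -a ∈ T → a = 0) (hne : ∃ x ∈ T, x ≠ 0) :
    ∃ l : AddSubmonoid (Fin d → ℤ), IsFaceOfSemigroup T l ∧ ∃ u ∈ l, u ≠ 0 ∧
      ∀ x ∈ l, ∃ q : ℚ, 0 ≤ q ∧ (fun i => (x i : ℚ)) = q • (fun i => (u i : ℚ)) := by
  classical
  set e := AddMonoidHom.compLeft (Int.castAddHom ℚ) (Fin d)
  have he : Function.Injective e := fun x y h => funext fun i => Int.cast_injective (congrFun h i)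
  set C := hull ℚ ((G.image e : Finset _) : Set (Fin d → ℚ))
  have hTC : ∀ x ∈ T, e x ∈ C := by
    intro x hx
    rw [← hG] at hx
    induction hx using AddSubmonoid.closure_induction with
    | mem g hg => exact Submodule.subset_span (Finset.mem_image_of_mem e hg)
    | zero => simp
    | add a b _ _ ha hb => simpa using add_mem ha hb
  have hCT : C ≤ hull ℚ (T.map e : Set (Fin d → ℚ)) := Submodule.span_mono <| by
    simp only [Finset.coe_image]
    exact Set.image_mono (hG ▸ AddSubmonoid.subset_closure)
  have hsal : C.lineal = ⊥ := eq_bot_iff.mpr fun x hx =>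
    (T.lineal_hull_map_eq_bot hT e he).le ⟨hCT hx.1, hCT hx.2⟩
  have hC : C ≠ ⊥ := by
    obtain ⟨x, hx, hx0⟩ := hne
    exact fun h => hx0 (he (by simpa [h] using hTC x hx))
  obtain ⟨_, hu, hu0, hface⟩ := PointedCone.exists_mem_isFaceOf_hull_singleton _ hsal hC
  obtain ⟨u, huG, rfl⟩ := Finset.mem_image.mp hu
  have huT : u ∈ T := hG ▸ AddSubmonoid.subset_closure huG
  refine ⟨T ⊓ (hull ℚ {e u}).toAddSubmonoid.comap e, ⟨inf_le_left, fun a ha b hb => ?_⟩,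
    u, ⟨huT, Submodule.subset_span rfl⟩, ?_, fun x hx => ?_⟩
  · simp [ha, hb, add_mem ha hb, hface.add_mem_iff_mem (hTC a ha) (hTC b hb)]
  · rintro rfl; simp at hu0
  · obtain ⟨q, hq⟩ := Submodule.mem_span_singleton.mp hx.2
    exact ⟨q, q.2, hq.symm⟩

theorem exists_extremal_ray_of_hole_general (d : ℕ)
    (S : AddSubmonoid (Fin d → ℤ))
    (hfg : ∃ G : Finset (Fin d → ℤ), AddSubmonoid.closure (G : Set (Fin d → ℤ)) = S)
    (hpointed : ∀ a ∈ S, -a ∈ S → a = 0)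
    -- every family of holes has dimension at least one:
    (hholes : ∀ w : Fin d → ℤ,
      w ∈ AddSubgroup.closure (S : Set (Fin d → ℤ)) →
      (∃ q : (Fin d → ℤ) → ℚ, (∀ g, 0 ≤ q g) ∧ {g | q g ≠ 0}.Finite ∧ (∀ g, q g ≠ 0 → g ∈ S) ∧
        (fun i => (w i : ℚ)) = ∑ᶠ g, q g • (fun i => (g i : ℚ))) →
      w ∉ S →
      ∃ F : AddSubmonoid (Fin d → ℤ), IsFaceOfSemigroup S F ∧ (∃ x ∈ F, x ≠ (0 : Fin d → ℤ)) ∧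
        ∀ z ∈ AddSubgroup.closure (F : Set (Fin d → ℤ)), w + z ∉ S)
    (v v' : Fin d → ℤ)
    -- `v' − v` is a hole: it lies in the normalization `S̄ = ℤS ∩ ℝ≥0 S` but not in `S`
    (hgrp : v' - v ∈ AddSubgroup.closure (S : Set (Fin d → ℤ)))
    (hcone : ∃ q : (Fin d → ℤ) → ℚ, (∀ g, 0 ≤ q g) ∧ {g | q g ≠ 0}.Finite ∧
      (∀ g, q g ≠ 0 → g ∈ S) ∧
      (fun i => ((v' - v) i : ℚ)) = ∑ᶠ g, q g • (fun i => (g i : ℚ)))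
    (hnot : v' - v ∉ S) :
    ∃ F : AddSubmonoid (Fin d → ℤ), IsFaceOfSemigroup S F ∧
      (∃ x ∈ F, x ≠ (0 : Fin d → ℤ)) ∧
      ∃ l : AddSubmonoid (Fin d → ℤ), IsFaceOfSemigroup F l ∧
        (∃ u ∈ l, u ≠ (0 : Fin d → ℤ) ∧
          ∀ x ∈ l, ∃ q : ℚ, 0 ≤ q ∧ (fun i => (x i : ℚ)) = q • (fun i => (u i : ℚ))) ∧
        ∀ z ∈ AddSubgroup.closure (l : Set (Fin d → ℤ)), v' - v + z ∉ S := by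
  classical
  obtain ⟨F, hF, hF0, hFdisj⟩ := hholes (v' - v) hgrp hcone hnot
  obtain ⟨G, hG⟩ := hfg
  have hFG : AddSubmonoid.closure ((G.filter (· ∈ F) : Finset _) : Set (Fin d → ℤ)) = F := by
    rw [Finset.coe_filter]
    exact hF.closure_inter_eq hG
  obtain ⟨l, hl, hlray⟩ := F.exists_isFaceOfSemigroup_ray _ hFG
    (fun a ha hna => hpointed a (hF.1 ha) (hF.1 hna)) hF0
  exact ⟨F, hF, hF0, l, hl, hlray, fun z hz => hFdisj z (AddSubgroup.closure_mono hl.1 hz)⟩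

/-- Key combinatorial step from the proof of Theorem 3.5: let `S ⊆ ℤ^d` (`d ≥ 2`) be a
pointed, finitely generated affine semigroup of full dimension `d`.  Assume every family
of holes of `S` has dimension at least `1` (equivalently `depth k[S] ≥ 2`); i.e., every
hole `w ∈ S̄ \ S` lies in a translated lattice `w + ℤF`, `F` a face of `S` of dimension
`≥ 1`, disjoint from `S`.  If `v, v' ∈ S` with `v' − v ∈ S̄ \ S`, then there exists a face
`F` of `S` of dimension `≥ 1` and an extremal ray `l` of `F` such that
`(v' − v + ℤl) ∩ S = ∅`. -/
theorem exists_extremal_ray_of_hole (d : ℕ) (hd : 2 ≤ d)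
    (S : AddSubmonoid (Fin d → ℤ))
    (hfg : ∃ G : Finset (Fin d → ℤ), AddSubmonoid.closure (G : Set (Fin d → ℤ)) = S)
    (hpointed : ∀ a ∈ S, -a ∈ S → a = 0)
    (hfull : Submodule.span ℚ ((fun v : Fin d → ℤ => (fun i => (v i : ℚ))) '' S) = ⊤)
    -- every family of holes has dimension at least one:
    (hholes : ∀ w : Fin d → ℤ,
      w ∈ AddSubgroup.closure (S : Set (Fin d → ℤ)) →
      (∃ q : (Fin d → ℤ) → ℚ, (∀ g, 0 ≤ q g) ∧ {g | q g ≠ 0}.Finite ∧ (∀ g, q g ≠ 0 → g ∈ S) ∧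
        (fun i => (w i : ℚ)) = ∑ᶠ g, q g • (fun i => (g i : ℚ))) →
      w ∉ S →
      ∃ F : AddSubmonoid (Fin d → ℤ), IsFaceOfSemigroup S F ∧ (∃ x ∈ F, x ≠ (0 : Fin d → ℤ)) ∧
        ∀ z ∈ AddSubgroup.closure (F : Set (Fin d → ℤ)), w + z ∉ S)
    (v v' : Fin d → ℤ) (hv : v ∈ S) (hv' : v' ∈ S)
    -- `v' − v` is a hole: it lies in the normalization `S̄ = ℤS ∩ ℝ≥0 S` but not in `S`
    (hgrp : v' - v ∈ AddSubgroup.closure (S : Set (Fin d → ℤ)))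
    (hcone : ∃ q : (Fin d → ℤ) → ℚ, (∀ g, 0 ≤ q g) ∧ {g | q g ≠ 0}.Finite ∧
      (∀ g, q g ≠ 0 → g ∈ S) ∧
      (fun i => ((v' - v) i : ℚ)) = ∑ᶠ g, q g • (fun i => (g i : ℚ)))
    (hnot : v' - v ∉ S) :
    ∃ F : AddSubmonoid (Fin d → ℤ), IsFaceOfSemigroup S F ∧
      (∃ x ∈ F, x ≠ (0 : Fin d → ℤ)) ∧
      ∃ l : AddSubmonoid (Fin d → ℤ), IsFaceOfSemigroup F l ∧
        (∃ u ∈ l, u ≠ (0 : Fin d → ℤ) ∧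
          ∀ x ∈ l, ∃ q : ℚ, 0 ≤ q ∧ (fun i => (x i : ℚ)) = q • (fun i => (u i : ℚ))) ∧
        ∀ z ∈ AddSubgroup.closure (l : Set (Fin d → ℤ)), v' - v + z ∉ S :=
  exists_extremal_ray_of_hole_general d S hfg hpointed hholes v v' hgrp hcone hnot
end

section
/- Let R = k[S] be a Cohen–Macaulay pointed affine semigroup ring whose canonical module is isomorphic to a monomial ideal I_R of R, and let V = V_{ω_R} ⊆ S be the exponent set of the minimal monomial generators of I_R. Then R is nearly Gorenstein if and only if for every minimal generator a of S there exist v ∈ V and u ∈ ℤS with u + w ∈ S for all w ∈ V, such that a = u + v. -/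
/-!
A homomorphism `φ : I → k[S]` satisfies `x^w' φ(x^w) = x^w φ(x^w')` for `w, w' ∈ V`, so every
exponent `b` occurring in `φ(x^w)` has `b - w ∈ S − V`: all exponents occurring in `tr(I)` lie in
`(S − V) + V`. Conversely, for `u ∈ S − V` multiplication by the Laurent monomial `x^u` maps `I`
into `k[S]`, so `x^(u + v) ∈ tr(I)` for every `v ∈ V`. Finally `m` is generated by the monomials
`x^a` with `a` an atom of `S`: divisibility in a finitely generated pointed `S` is a
well-quasi-order (Dickson's lemma), so below every nonzero element of `S` there is an atom.
-/

noncomputable section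

def traceIdeal (R : Type*) [CommRing R] (M : Type*) [AddCommGroup M] [Module R M] :
    Ideal R :=
  ⨆ φ : M →ₗ[R] R, LinearMap.range φ

open AddMonoidAlgebra

section Atoms

variable {G : Type*} [AddCommGroup G] (S : AddSubmonoid G)

def IsAtomIn (a : G) : Prop :=
  a ∈ S ∧ a ≠ 0 ∧ ∀ b ∈ S, ∀ c ∈ S, b + c = a → b = 0 ∨ c = 0

variable {S} in
/-- For an atom `a`, `S \ {a}` is a submonoid, so it contains no generating set. -/
lemma IsAtomIn.mem_of_closure_eq {a : G} (ha : IsAtomIn S a) {X : Set G}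
    (hX : AddSubmonoid.closure X = S) : a ∈ X := by
  obtain ⟨haS, ha0, hirr⟩ := ha
  by_contra haX
  let T : AddSubmonoid G :=
    { carrier := {b | b ∈ S ∧ b ≠ a}
      zero_mem' := ⟨S.zero_mem, Ne.symm ha0⟩
      add_mem' := by
        rintro b c ⟨hb, hba⟩ ⟨hc, hca⟩
        refine ⟨S.add_mem hb hc, fun hbc => ?_⟩
        rcases hirr b hb c hc hbc with rfl | rfl
        · exact hca (by simpa using hbc)
        · exact hba (by simpa using hbc) }
  have hST : S ≤ T := hX ▸ AddSubmonoid.closure_le.2 fun x hx =>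
    ⟨hX ▸ AddSubmonoid.subset_closure hx, fun h => haX (h ▸ hx)⟩
  exact (hST haS).2 rfl

lemma ne_zero_of_forall_closure_eq {a : G}
    (ha : ∀ X : Set G, AddSubmonoid.closure X = S → a ∈ X) : a ≠ 0 := by
  refine fun h => (ha ((S : Set G) \ {0}) ?_).2 h
  rw [← AddSubmonoid.closure_insert_zero, Set.insert_sdiff_singleton,
    Set.insert_eq_of_mem S.zero_mem, AddSubmonoid.closure_eq]

def DvdIn (t s : S) : Prop := (s : G) - t ∈ S

instance : IsPreorder S (DvdIn S) where
  refl t := by simp [DvdIn]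
  trans t s r hts hsr := by simpa [DvdIn] using S.add_mem hsr hts

lemma wellQuasiOrdered_dvdIn (hfg : ∃ F : Finset G, AddSubmonoid.closure (F : Set G) = S) :
    WellQuasiOrdered (DvdIn S) := by
  obtain ⟨F, rfl⟩ := hfg
  let f : (F → ℕ) → AddSubmonoid.closure (F : Set G) := fun c =>
    ⟨∑ i : F, c i • (i : G), AddSubmonoid.mem_closure_finset'.2 ⟨c, rfl⟩⟩
  refine wellQuasiOrdered_le.of_surjective ⟨f, fun {c c'} hcc' => ?_⟩ fun s => ?_
  · have : (f c' : G) = f (c' - c) + f c := by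
      simp only [f, ← Finset.sum_add_distrib, ← add_nsmul, Pi.sub_apply,
        tsub_add_cancel_of_le (hcc' _)]
    simp only [DvdIn, this, add_sub_cancel_right, SetLike.coe_mem]
  · obtain ⟨c, hc⟩ := AddSubmonoid.mem_closure_finset'.1 s.2
    exact ⟨c, Subtype.ext hc.symm⟩

variable {S} in
lemma exists_atom_sub_mem (hfg : ∃ F : Finset G, AddSubmonoid.closure (F : Set G) = S)
    (hpointed : ∀ a ∈ S, -a ∈ S → a = 0) {s : G} (hs : s ∈ S) (hs0 : s ≠ 0) :
    ∃ a, IsAtomIn S a ∧ s - a ∈ S := by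
  obtain ⟨a, ⟨ha0, has⟩, hmin⟩ := (wellQuasiOrdered_dvdIn S hfg).wellFounded.has_min
    {t | (t : G) ≠ 0 ∧ DvdIn S t ⟨s, hs⟩} ⟨⟨s, hs⟩, hs0, refl _⟩
  refine ⟨a, ⟨a.2, ha0, fun b hb c hc hbc => ?_⟩, has⟩
  by_contra! h
  have hba : DvdIn S ⟨b, hb⟩ a := by simpa [DvdIn, ← hbc] using hc
  refine hmin ⟨b, hb⟩ ⟨h.1, _root_.trans hba has⟩ ⟨hba, fun hab => h.2 (hpointed c hc ?_)⟩
  simpa [DvdIn, ← hbc] using hab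

end Atoms

section Trace

variable {R L : Type*} [CommRing R] [CommRing L] {ι : R →+* L} {q : L}

lemma mul_mem_range_of_mem_span {s : Set R} (hs : ∀ g ∈ s, q * ι g ∈ ι.range) {y : R}
    (hy : y ∈ Ideal.span s) : q * ι y ∈ ι.range := by
  induction hy using Submodule.span_induction with
  | mem g hg => exact hs g hg
  | zero => simp
  | add y z _ _ hy hz => rw [map_add, mul_add]; exact add_mem hy hz
  | smul r y _ hy => rw [smul_eq_mul, map_mul, mul_left_comm]; exact mul_mem ⟨r, rfl⟩ hy

lemma mem_traceIdeal_of_mul_mem_range (hι : Function.Injective ι) {I : Ideal R}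
    (hq : ∀ y ∈ I, q * ι y ∈ ι.range) {y r : R} (hy : y ∈ I) (hr : ι r = q * ι y) :
    r ∈ traceIdeal R I := by
  choose f hf using fun y : I => hq y y.2
  let φ : I →ₗ[R] R :=
    { toFun := f
      map_add' := fun y z => hι (by simp [hf, mul_add])
      map_smul' := fun r y => hι (by simp [hf, mul_left_comm]) }
  have : r = φ ⟨y, hy⟩ := hι (hr.trans (hf ⟨y, hy⟩).symm)
  exact this ▸ Submodule.mem_iSup_of_mem φ (LinearMap.mem_range_self φ _)

end Trace

section MonoidAlgebra

variable {k M : Type*} [CommSemiring k]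

lemma setOf_single_eq_image_of' [AddMonoid M] (P : M → Prop) :
    {f : AddMonoidAlgebra k M | ∃ v, P v ∧ f = single v 1} = of' k M '' {v | P v} := by
  ext f
  simp [of'_apply, eq_comm]

/-- Comparing `x^w' • φ(x^w) = φ(x^w x^w') = x^w • φ(x^w')` at the monomial `b + w'`. -/
lemma exists_add_eq_of_mem_support [AddCommMonoid M] [IsCancelAdd M]
    {I : Ideal (AddMonoidAlgebra k M)} (φ : I →ₗ[AddMonoidAlgebra k M] AddMonoidAlgebra k M)
    {w w' : M} (hw : of' k M w ∈ I) (hw' : of' k M w' ∈ I) {b : M}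
    (hb : b ∈ (φ ⟨_, hw⟩).coeff.support) :
    ∃ d, b + w' = d + w := by
  have hswap : of' k M w' • (⟨_, hw⟩ : I) = of' k M w • (⟨_, hw'⟩ : I) :=
    Subtype.ext (mul_comm _ _)
  have hmem : of' k M w' * φ ⟨_, hw⟩ ∈ Ideal.span (of' k M '' {w}) := by
    rw [← smul_eq_mul, ← map_smul, hswap, map_smul, Set.image_singleton]
    exact Ideal.mul_mem_right _ _ (Ideal.mem_span_singleton_self _)
  obtain ⟨_, rfl, d, hd⟩ := AddMonoidAlgebra.mem_ideal_span_of'_image.1 hmem (w' + b) (by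
    simpa [of'_apply, Finsupp.mem_support_iff] using hb)
  exact ⟨d, (add_comm _ _).trans hd⟩

end MonoidAlgebra

section Semigroup

variable {k G : Type*} [CommRing k] [AddCommGroup G] {S : AddSubmonoid G} {V : Set G}
  {I : Ideal (AddMonoidAlgebra k S)}

lemma exists_eq_add_of_single_mem_traceIdeal [Nontrivial k] (hVS : V ⊆ S)
    (hI : I = Ideal.span (of' k S '' {v | (v : G) ∈ V})) {a : S}
    (ha : single a (1 : k) ∈ traceIdeal (AddMonoidAlgebra k S) I) :
    ∃ v ∈ V, ∃ u ∈ AddSubgroup.closure (S : Set G), (∀ w ∈ V, u + w ∈ S) ∧ (a : G) = u + v := by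
  let N : Set S :=
    {b | ∃ v ∈ V, ∃ u ∈ AddSubgroup.closure (S : Set G), (∀ w ∈ V, u + w ∈ S) ∧ (b : G) = u + v}
  suffices htr : traceIdeal (AddMonoidAlgebra k S) I ≤ Ideal.span (of' k S '' N) by
    obtain ⟨b, ⟨v, hv, u, hu, huV, hb⟩, d, rfl⟩ :=
      mem_ideal_span_of'_image.1 (htr ha) a (by simp)
    refine ⟨v, hv, u + d, add_mem hu (AddSubgroup.subset_closure d.2), fun w hw => ?_, ?_⟩
    · simpa [add_right_comm] using S.add_mem (huV w hw) d.2
    · simp [hb, add_comm, add_left_comm]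
  refine iSup_le fun φ => ?_
  rintro _ ⟨⟨y, hy⟩, rfl⟩
  subst hI
  induction hy using Submodule.span_induction with
  | mem g hg =>
    obtain ⟨w, hw, rfl⟩ := hg
    refine mem_ideal_span_of'_image.2 fun b hb => ⟨b, ⟨w, hw, b - w, ?_, fun w' hw' => ?_, ?_⟩,
      0, (zero_add b).symm⟩
    · exact sub_mem (AddSubgroup.subset_closure b.2) (AddSubgroup.subset_closure w.2)
    · have hw'I : of' k S ⟨w', hVS hw'⟩ ∈ Ideal.span (of' k S '' {v | (v : G) ∈ V}) :=
        Ideal.subset_span ⟨⟨w', hVS hw'⟩, hw', rfl⟩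
      obtain ⟨d, hd⟩ := exists_add_eq_of_mem_support φ _ hw'I hb
      have hd' : (b : G) + w' = d + w := congrArg Subtype.val hd
      rw [sub_add_eq_add_sub, hd', add_sub_cancel_right]
      exact d.2
    · simp
  | zero => exact (map_zero φ).symm ▸ zero_mem _
  | add y z hy' hz' hy hz => exact (map_add φ ⟨y, hy'⟩ ⟨z, hz'⟩).symm ▸ add_mem hy hz
  | smul r y hy' hy => exact (map_smul φ r ⟨y, hy'⟩).symm ▸ Ideal.mul_mem_left _ r hy

lemma single_mem_traceIdeal (hVS : V ⊆ S) (hI : I = Ideal.span (of' k S '' {v | (v : G) ∈ V}))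
    {u : G} (hu : ∀ w ∈ V, u + w ∈ S) {v : G} (hv : v ∈ V) {a : S} (ha : (a : G) = u + v) :
    single a (1 : k) ∈ traceIdeal (AddMonoidAlgebra k S) I := by
  have hι : Function.Injective (mapDomainRingHom k S.subtype) :=
    mapDomain_injective Subtype.val_injective
  subst hI
  refine mem_traceIdeal_of_mul_mem_range (q := single u 1) hι
    (fun y hy => mul_mem_range_of_mem_span ?_ hy) (Ideal.subset_span ⟨⟨v, hVS hv⟩, hv, rfl⟩) ?_
  · rintro _ ⟨w, hw, rfl⟩
    exact ⟨single ⟨u + w, hu w hw⟩ 1, by simp [of'_apply, single_mul_single]⟩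
  · simp [of'_apply, single_mul_single, ha]

end Semigroup

theorem nearlyGorenstein_iff_general {d : ℕ} (k : Type*) [Field k]
    (S : AddSubmonoid (Fin d → ℤ))
    (hfg : ∃ G : Finset (Fin d → ℤ), AddSubmonoid.closure (G : Set (Fin d → ℤ)) = S)
    (hpointed : ∀ a ∈ S, -a ∈ S → a = 0)
    (V : Finset (Fin d → ℤ)) (hVS : (V : Set (Fin d → ℤ)) ⊆ S)
    -- the monomial (canonical) ideal `I` with minimal monomial generating set `V`
    (I : Ideal (AddMonoidAlgebra k S))
    (hI : I = Ideal.span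
      {f : AddMonoidAlgebra k S | ∃ v : S, (v : Fin d → ℤ) ∈ V ∧
        f = AddMonoidAlgebra.single v (1 : k)})
    -- the graded maximal ideal `m` of `R = k[S]`
    (m : Ideal (AddMonoidAlgebra k S))
    (hm : m = Ideal.span
      {f : AddMonoidAlgebra k S | ∃ s : S, (s : Fin d → ℤ) ≠ 0 ∧
        f = AddMonoidAlgebra.single s (1 : k)}) :
    m ≤ traceIdeal (AddMonoidAlgebra k S) I ↔
      ∀ a : Fin d → ℤ, a ∈ S → (∀ X : Set (Fin d → ℤ), AddSubmonoid.closure X = S → a ∈ X) →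
        ∃ v ∈ V, ∃ u ∈ AddSubgroup.closure (S : Set (Fin d → ℤ)),
          (∀ w ∈ V, u + w ∈ S) ∧ a = u + v := by
  rw [setOf_single_eq_image_of'] at hI
  rw [hm, setOf_single_eq_image_of', Ideal.span_le]
  constructor
  · intro hle a haS hgen
    exact exists_eq_add_of_single_mem_traceIdeal hVS hI
      (hle ⟨⟨a, haS⟩, ne_zero_of_forall_closure_eq S hgen, rfl⟩)
  · rintro hgen _ ⟨s, hs0, rfl⟩
    obtain ⟨a, ha, hsa⟩ := exists_atom_sub_mem hfg hpointed s.2 hs0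
    obtain ⟨v, hv, u, -, hu, hau⟩ := hgen a ha.1 fun X hX => ha.mem_of_closure_eq hX
    have hsplit : of' k S s = single ⟨a, ha.1⟩ 1 * single ⟨s - a, hsa⟩ 1 := by
      rw [single_mul_single, one_mul, of'_apply]
      congr
      ext
      simp
    rw [hsplit]
    exact Ideal.mul_mem_right _ _ (single_mem_traceIdeal hVS hI hu hv hau)

/-- Corollary 3.2: let `R = k[S]` be a Cohen–Macaulay pointed affine semigroup ring whose
canonical module is (isomorphic to) the monomial ideal `I` with minimal monomial
generators `x^v`, `v ∈ V`.  Then `R` is nearly Gorenstein (`m ⊆ tr(ω_R) = tr(I)`) iff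
every minimal generator `a` of `S` can be written as `a = u + v` with `v ∈ V` and
`u ∈ ℤS` satisfying `u + w ∈ S` for all `w ∈ V`. -/
theorem nearlyGorenstein_iff {d : ℕ} (k : Type*) [Field k]
    (S : AddSubmonoid (Fin d → ℤ))
    (hfg : ∃ G : Finset (Fin d → ℤ), AddSubmonoid.closure (G : Set (Fin d → ℤ)) = S)
    (hpointed : ∀ a ∈ S, -a ∈ S → a = 0)
    (V : Finset (Fin d → ℤ)) (hVS : (V : Set (Fin d → ℤ)) ⊆ S) (hVne : V.Nonempty)
    -- the monomial (canonical) ideal `I` with minimal monomial generating set `V`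
    (I : Ideal (AddMonoidAlgebra k S))
    (hI : I = Ideal.span
      {f : AddMonoidAlgebra k S | ∃ v : S, (v : Fin d → ℤ) ∈ V ∧
        f = AddMonoidAlgebra.single v (1 : k)})
    (hminV : ∀ v ∈ V, ∀ w ∈ V, v ≠ w → v - w ∉ S)
    -- the graded maximal ideal `m` of `R = k[S]`
    (m : Ideal (AddMonoidAlgebra k S))
    (hm : m = Ideal.span
      {f : AddMonoidAlgebra k S | ∃ s : S, (s : Fin d → ℤ) ≠ 0 ∧
        f = AddMonoidAlgebra.single s (1 : k)})
    -- `R` is Cohen–Macaulay: there is a regular sequence in `m` of length `dim R`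
    (hCM : ∃ rs : List (AddMonoidAlgebra k S), RingTheory.Sequence.IsRegular (AddMonoidAlgebra k S) rs ∧
      (∀ r ∈ rs, r ∈ m) ∧ (rs.length : WithBot ℕ∞) = ringKrullDim (AddMonoidAlgebra k S)) :
    m ≤ traceIdeal (AddMonoidAlgebra k S) I ↔
      ∀ a : Fin d → ℤ, a ∈ S → (∀ X : Set (Fin d → ℤ), AddSubmonoid.closure X = S → a ∈ X) →
        ∃ v ∈ V, ∃ u ∈ AddSubgroup.closure (S : Set (Fin d → ℤ)),
          (∀ w ∈ V, u + w ∈ S) ∧ a = u + v :=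
  nearlyGorenstein_iff_general k S hfg hpointed V hVS I hI m hm
end
end

section
/- Let S be a pointed affine semigroup with semigroup ring R = k[S] (a domain), let I be a monomial ideal of R minimally generated by monomials x^{v_1}, …, x^{v_r}, and let a ∈ ℤ^d with x^a ∈ R. Then x^a ∈ tr(I) if and only if there exist an index i and u ∈ ℤS with u + v_j ∈ S for all j, such that a = u + v_i. -/
/-!
Every `R`-linear map `φ : I → R` satisfies `x^w φ(x^v) = x^v φ(x^w)` for any two generators, so
a monomial `x^s` of `φ(x^v)` yields `s + w = v + t` with `t ∈ S`, i.e. `u := s - v` satisfies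
`u + w ∈ S` for every generator exponent `w`. The exponents `u + v` obtained this way are closed
under adding `S`, so they span an ideal containing every `φ(I)`, hence `tr(I)`. Conversely, for
such a `u`, multiplication by `x^u` in the group algebra `k[G]` maps `I` into `k[S]`, giving a map
`I → k[S]` that sends `x^v` to `x^(u + v)`.
-/

noncomputable section

open AddMonoidAlgebra

theorem Ideal.mul_map_comm {R : Type*} [CommSemiring R] {I : Ideal R} (φ : I →ₗ[R] R)
    (a b : I) : (a : R) * φ b = b * φ a := by
  have hab : (a : R) • b = (b : R) • a := Subtype.ext (mul_comm _ _)
  simpa only [map_smul, smul_eq_mul] using congrArg φ hab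

theorem LinearMap.range_le_of_forall_mem_span {R M N : Type*} [Semiring R] [AddCommMonoid M]
    [AddCommMonoid N] [Module R M] [Module R N] {s : Set M} (φ : Submodule.span R s →ₗ[R] N)
    {p : Submodule R N} (h : ∀ x : Submodule.span R s, (x : M) ∈ s → φ x ∈ p) :
    LinearMap.range φ ≤ p := by
  rw [LinearMap.range_eq_map, ← Submodule.span_span_coe_preimage, Submodule.map_span_le]
  exact h

theorem range_le_traceIdeal {R M : Type*} [CommRing R] [AddCommGroup M] [Module R M]
    (φ : M →ₗ[R] R) : LinearMap.range φ ≤ traceIdeal R M :=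
  le_iSup (fun ψ : M →ₗ[R] R ↦ LinearMap.range ψ) φ

theorem Ideal.exists_linearMap_span_eq_mul {R L : Type*} [CommSemiring R] [CommSemiring L]
    {ι : R →+* L} (hι : Function.Injective ι) {s : Set R} {q : L}
    (hq : ∀ f ∈ s, ∃ g, ι g = q * ι f) :
    ∃ φ : Ideal.span s →ₗ[R] R, ∀ f, ι (φ f) = q * ι f := by
  have hI : ∀ f ∈ Ideal.span s, ∃ g, ι g = q * ι f := by
    intro f hf
    induction hf using Submodule.span_induction with
    | mem f hf => exact hq f hf
    | zero => exact ⟨0, by simp⟩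
    | add f₁ f₂ _ _ h₁ h₂ =>
      obtain ⟨g₁, hg₁⟩ := h₁
      obtain ⟨g₂, hg₂⟩ := h₂
      exact ⟨g₁ + g₂, by rw [map_add, map_add, hg₁, hg₂, mul_add]⟩
    | smul r f _ h =>
      obtain ⟨g, hg⟩ := h
      exact ⟨r * g, by rw [smul_eq_mul, map_mul, map_mul, hg, mul_left_comm]⟩
  choose g hg using hI
  refine ⟨{ toFun := fun f ↦ g f f.2, map_add' := ?_, map_smul' := ?_ }, fun f ↦ hg f f.2⟩
  · intro f₁ f₂
    apply hι
    simp only [map_add, hg, Submodule.coe_add, mul_add]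
  · intro r f
    apply hι
    simp only [hg, SetLike.val_smul, smul_eq_mul, map_mul, RingHom.id_apply, mul_left_comm]

theorem AddMonoidAlgebra.exists_add_eq_add_of_mem_support {k M : Type*} [CommSemiring k]
    [AddCommMonoid M] [IsCancelAdd M] {I : Ideal k[M]} (φ : I →ₗ[k[M]] k[M]) {v w : M}
    (hv : single v 1 ∈ I) (hw : single w 1 ∈ I) {s : M}
    (hs : s ∈ (φ ⟨_, hv⟩).coeff.support) :
    ∃ t ∈ (φ ⟨_, hw⟩).coeff.support, s + w = v + t := by
  classical
  have hws : w + s ∈ (single w 1 * φ ⟨_, hv⟩).coeff.support := by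
    simpa only [Finsupp.mem_support_iff, coeff_single_mul_add, one_mul] using hs
  rw [Ideal.mul_map_comm φ ⟨_, hw⟩ ⟨_, hv⟩] at hws
  obtain ⟨t, ht, hvt⟩ := Finset.mem_image.mp (support_coeff_single_mul_subset _ _ _ hws)
  exact ⟨t, ht, by rw [add_comm, hvt]⟩

section Monomial

variable {G : Type*} [AddCommGroup G] (S : AddSubmonoid G) (V : Set G)

/-- `(S - V_I) + V_I` in the paper's notation. -/
def traceExponents : Set G :=
  {a | ∃ v ∈ V, ∃ u ∈ AddSubgroup.closure (S : Set G), (∀ w ∈ V, u + w ∈ S) ∧ a = u + v}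

def monomialGenerators (k : Type*) [CommRing k] : Set k[S] :=
  {f | ∃ v : S, (v : G) ∈ V ∧ f = single v 1}

variable {S V}

theorem add_mem_traceExponents {t a : G} (ht : t ∈ S) (ha : a ∈ traceExponents S V) :
    t + a ∈ traceExponents S V := by
  obtain ⟨v, hv, u, hu, huV, rfl⟩ := ha
  refine ⟨v, hv, t + u, add_mem (AddSubgroup.subset_closure ht) hu, fun w hw ↦ ?_, (add_assoc ..).symm⟩
  rw [add_assoc]
  exact S.add_mem ht (huV w hw)

variable (k : Type*) [CommRing k]

theorem traceIdeal_span_monomialGenerators_le (hVS : V ⊆ S) :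
    traceIdeal k[S] (Ideal.span (monomialGenerators S V k)) ≤
      Ideal.span (of' k S '' {s | (s : G) ∈ traceExponents S V}) := by
  refine iSup_le fun φ ↦ LinearMap.range_le_of_forall_mem_span φ ?_
  rintro ⟨_, hf⟩ ⟨v, hv, rfl⟩
  rw [mem_ideal_span_of'_image]
  refine fun s hs ↦ ⟨s, ?_, 0, (zero_add s).symm⟩
  have hsv : (s : G) - v ∈ AddSubgroup.closure (S : Set G) :=
    sub_mem (AddSubgroup.subset_closure s.2) (AddSubgroup.subset_closure v.2)
  refine ⟨v, hv, (s : G) - v, hsv, fun w hw ↦ ?_, (sub_add_cancel _ _).symm⟩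
  obtain ⟨t, -, hst⟩ := exists_add_eq_add_of_mem_support φ hf
    (Ideal.subset_span ⟨⟨w, hVS hw⟩, hw, rfl⟩) hs
  have hst' : (s : G) + w = v + t := congrArg Subtype.val hst
  convert t.2 using 1
  rw [← add_right_inj (v : G), ← hst']
  abel

theorem mem_traceExponents_of_single_mem_traceIdeal [Nontrivial k] (hVS : V ⊆ S) {a : S}
    (ha : single a (1 : k) ∈ traceIdeal k[S] (Ideal.span (monomialGenerators S V k))) :
    (a : G) ∈ traceExponents S V := by
  have ha' := traceIdeal_span_monomialGenerators_le k hVS ha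
  rw [mem_ideal_span_of'_image] at ha'
  obtain ⟨b, hb, t, rfl⟩ := ha' a (by simp)
  exact add_mem_traceExponents t.2 hb

theorem single_mem_traceIdeal_of_mem_traceExponents (hVS : V ⊆ S) {a : S}
    (ha : (a : G) ∈ traceExponents S V) :
    single a (1 : k) ∈ traceIdeal k[S] (Ideal.span (monomialGenerators S V k)) := by
  obtain ⟨v, hv, u, -, huV, hauv⟩ := ha
  have hι : Function.Injective (mapDomainRingHom k S.subtype) :=
    mapDomain_injective Subtype.val_injective
  obtain ⟨φ, hφ⟩ := Ideal.exists_linearMap_span_eq_mul hι (s := monomialGenerators S V k) (q := single u 1) <| by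
    rintro _ ⟨w, hw, rfl⟩
    exact ⟨single ⟨u + w, huV w hw⟩ 1, by simp [single_mul_single]⟩
  have hφv : φ ⟨single ⟨v, hVS hv⟩ 1, Ideal.subset_span ⟨_, hv, rfl⟩⟩ = single a 1 :=
    hι <| by simp [hφ, single_mul_single, hauv]
  exact range_le_traceIdeal φ (hφv ▸ LinearMap.mem_range_self φ _)

end Monomial

theorem monomial_mem_traceIdeal_iff_general {d : ℕ} (k : Type*) [Field k]
    (S : AddSubmonoid (Fin d → ℤ))
    (V : Finset (Fin d → ℤ)) (hVS : (V : Set (Fin d → ℤ)) ⊆ S)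
    (I : Ideal (AddMonoidAlgebra k S))
    (hI : I = Ideal.span
      {f : AddMonoidAlgebra k S | ∃ v : S, (v : Fin d → ℤ) ∈ V ∧ f = AddMonoidAlgebra.single v (1 : k)})
    (a : Fin d → ℤ) (ha : a ∈ S) :
    AddMonoidAlgebra.single (⟨a, ha⟩ : S) (1 : k) ∈ traceIdeal (AddMonoidAlgebra k S) I ↔
      ∃ v ∈ V, ∃ u ∈ AddSubgroup.closure (S : Set (Fin d → ℤ)),
        (∀ w ∈ V, u + w ∈ S) ∧ a = u + v := by
  subst hI
  exact ⟨mem_traceExponents_of_single_mem_traceIdeal (a := ⟨a, ha⟩) k hVS,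
    single_mem_traceIdeal_of_mem_traceExponents (a := ⟨a, ha⟩) k hVS⟩

/-- Proposition 3.1: let `S` be a pointed affine semigroup, `R = k[S]`, and let `I` be a
monomial ideal of `R` minimally generated by the monomials `x^v`, `v ∈ V`.  For `a ∈ S`,
the monomial `x^a` lies in `tr(I)` iff `a = u + v` for some `v ∈ V` and some `u ∈ ℤS`
with `u + w ∈ S` for all `w ∈ V`. -/
theorem monomial_mem_traceIdeal_iff {d : ℕ} (k : Type*) [Field k]
    (S : AddSubmonoid (Fin d → ℤ))
    (hfg : ∃ G : Finset (Fin d → ℤ), AddSubmonoid.closure (G : Set (Fin d → ℤ)) = S)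
    (hpointed : ∀ a ∈ S, -a ∈ S → a = 0)
    (V : Finset (Fin d → ℤ)) (hVS : (V : Set (Fin d → ℤ)) ⊆ S) (hVne : V.Nonempty)
    (I : Ideal (AddMonoidAlgebra k S))
    (hI : I = Ideal.span
      {f : AddMonoidAlgebra k S | ∃ v : S, (v : Fin d → ℤ) ∈ V ∧ f = AddMonoidAlgebra.single v (1 : k)})
    -- minimality of the monomial generating set
    (hmin : ∀ v ∈ V, ∀ w ∈ V, v ≠ w → v - w ∉ S)
    (a : Fin d → ℤ) (ha : a ∈ S) :
    AddMonoidAlgebra.single (⟨a, ha⟩ : S) (1 : k) ∈ traceIdeal (AddMonoidAlgebra k S) I ↔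
      ∃ v ∈ V, ∃ u ∈ AddSubgroup.closure (S : Set (Fin d → ℤ)),
        (∀ w ∈ V, u + w ∈ S) ∧ a = u + v :=
  monomial_mem_traceIdeal_iff_general k S V hVS I hI a ha
end
end
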